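/- arXiv:2409.14359 — 2 statements merged into one kernel-verified Lean document; each statement's English description precedes it below -/
import Mathlib

section
/- Let 𝔉 be a maximal commuting family of i-boxes in [a,b]. Then for any [x,y] ∈ 𝔉 there exists a unique z ∈ {x,y} such that for every admissible chain (𝔠_k)_{1≤k≤l} with extent [a,b] whose set of boxes is 𝔉, if [x,y] = 𝔠_k then {z} = 𝔠̃_k \ 𝔠̃_{k−1}. (This z is called the effective end of [x,y] in 𝔉.) -/
namespace IBoxes

variable {I : Type*}

/-- `gapBelow i x m` encodes `x₋ < m` : no position `t` with `m ≤ t < x` has the color of `x`. -/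
def gapBelow (i : ℤ → I) (x m : ℤ) : Prop := ∀ t : ℤ, m ≤ t → t < x → i t ≠ i x

/-- `gapAbove i y m` encodes `m < y₊` : no position `t` with `y < t ≤ m` has the color of `y`. -/
def gapAbove (i : ℤ → I) (y m : ℤ) : Prop := ∀ t : ℤ, y < t → t ≤ m → i t ≠ i y

/-- `[x,y]` is an `i`-box. -/
def IsBox (i : ℤ → I) (x y : ℤ) : Prop := x ≤ y ∧ i x = i y

/-- Two `i`-boxes commute: `(x₁)₋ < x₂ ≤ y₂ < (y₁)₊` or `(x₂)₋ < x₁ ≤ y₁ < (y₂)₊`. -/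
def BoxCommute (i : ℤ → I) (x₁ y₁ x₂ y₂ : ℤ) : Prop :=
  (gapBelow i x₁ x₂ ∧ gapAbove i y₁ y₂) ∨ (gapBelow i x₂ x₁ ∧ gapAbove i y₂ y₁)

/-- A commuting family of `i`-boxes. -/
def CommFamily (i : ℤ → I) (F : Set (ℤ × ℤ)) : Prop :=
  (∀ p ∈ F, IsBox i p.1 p.2) ∧ ∀ p ∈ F, ∀ q ∈ F, BoxCommute i p.1 p.2 q.1 q.2

/-- All boxes of the family lie in `[a,b]`. -/
def InRange (a b : ℤ) (F : Set (ℤ × ℤ)) : Prop := ∀ p ∈ F, a ≤ p.1 ∧ p.2 ≤ b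

/-- A maximal commuting family of `i`-boxes in `[a,b]`. -/
def MaxCommFamily (i : ℤ → I) (a b : ℤ) (F : Set (ℤ × ℤ)) : Prop :=
  CommFamily i F ∧ InRange a b F ∧
    ∀ G : Set (ℤ × ℤ), CommFamily i G → InRange a b G → F ⊆ G → F = G

/-- `x' = x₊`, the next position with the color of `x`. -/
def NextSame (i : ℤ → I) (x x' : ℤ) : Prop :=
  x < x' ∧ i x' = i x ∧ ∀ t : ℤ, x < t → t < x' → i t ≠ i x

/-- `y' = y₋`, the previous position with the color of `y`. -/
def PrevSame (i : ℤ → I) (y y' : ℤ) : Prop :=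
  y' < y ∧ i y' = i y ∧ ∀ t : ℤ, y' < t → t < y → i t ≠ i y

/-- `p` is frozen in `[a,b]` : `(p.1)₋ < a` and `b < (p.2)₊`. -/
def Frozen (i : ℤ → I) (a b : ℤ) (p : ℤ × ℤ) : Prop :=
  gapBelow i p.1 a ∧ gapAbove i p.2 b

/-- `p = [lo, hi}`, i.e. `p = [lo, hi(i lo)⁻]`. -/
def IsLBox (i : ℤ → I) (lo hi : ℤ) (p : ℤ × ℤ) : Prop :=
  p.1 = lo ∧ lo ≤ p.2 ∧ p.2 ≤ hi ∧ i p.2 = i lo ∧ ∀ t : ℤ, p.2 < t → t ≤ hi → i t ≠ i lo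

/-- `p = {lo, hi]`, i.e. `p = [lo(i hi)⁺, hi]`. -/
def IsRBox (i : ℤ → I) (lo hi : ℤ) (p : ℤ × ℤ) : Prop :=
  p.2 = hi ∧ lo ≤ p.1 ∧ p.1 ≤ hi ∧ i p.1 = i hi ∧ ∀ t : ℤ, lo ≤ t → t < p.1 → i t ≠ i hi

/-- An admissible chain of `i`-boxes `𝔠_k = box k` (for `1 ≤ k ≤ l`) with envelopes
`𝔠̃_k = [lo k, hi k]`. -/
structure AdmissibleChain (i : ℤ → I) (l : ℕ) where
  lo : ℕ → ℤ
  hi : ℕ → ℤ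
  box : ℕ → ℤ × ℤ
  size : ∀ k : ℕ, 1 ≤ k → k ≤ l → hi k = lo k + (k : ℤ) - 1
  step : ∀ k : ℕ, 1 ≤ k → k < l →
    (lo (k + 1) = lo k - 1 ∧ hi (k + 1) = hi k) ∨
    (lo (k + 1) = lo k ∧ hi (k + 1) = hi k + 1)
  box_spec : ∀ k : ℕ, 1 ≤ k → k ≤ l →
    IsLBox i (lo k) (hi k) (box k) ∨ IsRBox i (lo k) (hi k) (box k)
  cover : ∀ k : ℕ, 1 ≤ k → k ≤ l →
    Set.Icc (lo k) (hi k) = ⋃ j ∈ Set.Icc 1 k, Set.Icc ((box j).1) ((box j).2)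

/-- The set of boxes appearing in an admissible chain. -/
def boxesOf {i : ℤ → I} {l : ℕ} (C : AdmissibleChain i l) : Set (ℤ × ℤ) :=
  {p | ∃ k : ℕ, 1 ≤ k ∧ k ≤ l ∧ C.box k = p}

/-- The envelope `𝔠̃_k` as a set, with `𝔠̃_0 = ∅`. -/
def env {i : ℤ → I} {l : ℕ} (C : AdmissibleChain i l) (k : ℕ) : Set ℤ :=
  if k = 0 then ∅ else Set.Icc (C.lo k) (C.hi k)

/-- `z` is the effective end of the box `(x,y)` of the maximal commuting family `F` in `[a,b]`. -/
def IsEffectiveEnd (i : ℤ → I) (a b : ℤ) (F : Set (ℤ × ℤ)) (x y z : ℤ) : Prop :=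
  z ∈ ({x, y} : Set ℤ) ∧
    ∀ (l : ℕ) (C : AdmissibleChain i l), C.lo l = a → C.hi l = b → boxesOf C = F →
      ∀ k : ℕ, 1 ≤ k → k ≤ l → C.box k = (x, y) →
        ({z} : Set ℤ) = env C k \ env C (k - 1)

/-- `[x,y]` is in the left corner of `F`: `[x₊,y] ∈ F` and `[x,y₊] ∈ F`. -/
def LeftCorner (i : ℤ → I) (F : Set (ℤ × ℤ)) (x y : ℤ) : Prop :=
  (∃ x', NextSame i x x' ∧ (x', y) ∈ F) ∧ (∃ y', NextSame i y y' ∧ (x, y') ∈ F)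

/-- `[x,y]` is in the right corner of `F`: `[x,y₋] ∈ F` and `[x₋,y] ∈ F`. -/
def RightCorner (i : ℤ → I) (F : Set (ℤ × ℤ)) (x y : ℤ) : Prop :=
  (∃ y', PrevSame i y y' ∧ (x, y') ∈ F) ∧ (∃ x', PrevSame i x x' ∧ (x', y) ∈ F)

/-- The number of positions of color `j` in `[x,y]`. -/
noncomputable def colorCount (i : ℤ → I) (j : I) (x y : ℤ) : ℕ :=
  {s : ℤ | x ≤ s ∧ s ≤ y ∧ i s = j}.ncard

/-! ### Auxiliary lemmas -/

section Aux

variable {i : ℤ → I}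

theorem boxCommute_symm {x₁ y₁ x₂ y₂ : ℤ} (h : BoxCommute i x₁ y₁ x₂ y₂) :
    BoxCommute i x₂ y₂ x₁ y₁ := h.symm

theorem boxCommute_self (x y : ℤ) : BoxCommute i x y x y := by
  refine Or.inl ⟨fun t h1 h2 => absurd h2 (by omega), fun t h1 h2 => absurd h2 (by omega)⟩

namespace AdmissibleChain

variable {l : ℕ} (C : AdmissibleChain i l)

theorem mono {j k : ℕ} (h1 : 1 ≤ j) (hjk : j ≤ k) (hkl : k ≤ l) :
    C.lo k ≤ C.lo j ∧ C.hi j ≤ C.hi k := by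
  induction k with
  | zero => omega
  | succ m ih =>
    rcases Nat.lt_or_ge j (m + 1) with h | h
    · have hstep := C.step m (by omega) (by omega)
      have := ih (by omega) (by omega)
      rcases hstep with ⟨e1, e2⟩ | ⟨e1, e2⟩ <;> omega
    · have : j = m + 1 := by omega
      subst this; exact ⟨le_refl _, le_refl _⟩

theorem box_sub {k : ℕ} (h1 : 1 ≤ k) (hkl : k ≤ l) :
    C.lo k ≤ (C.box k).1 ∧ (C.box k).1 ≤ (C.box k).2 ∧ (C.box k).2 ≤ C.hi k := by
  rcases C.box_spec k h1 hkl with h | h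
  · obtain ⟨e1, e2, e3, _, _⟩ := h
    exact ⟨by omega, by omega, e3⟩
  · obtain ⟨e1, e2, e3, _, _⟩ := h
    exact ⟨e2, by omega, by omega⟩

theorem env_mono {j m : ℕ} (hjm : j ≤ m) (h1 : 1 ≤ m) (hml : m ≤ l) :
    env C j ⊆ env C m := by
  rcases Nat.eq_zero_or_pos j with h | h
  · subst h; simp [env]
  · have := C.mono h hjm hml
    simp only [env, if_neg (by omega : j ≠ 0), if_neg (by omega : m ≠ 0)]
    exact Set.Icc_subset_Icc this.1 this.2

theorem newpoint {k : ℕ} (h1 : 1 ≤ k) (hkl : k ≤ l) :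
    ∃ z : ℤ, ((C.box k).1 ≤ z ∧ z ≤ (C.box k).2) ∧ (z = C.lo k ∨ z = C.hi k) ∧
      ∀ m : ℤ, m ∈ env C (k - 1) ↔ (C.lo k ≤ m ∧ m ≤ C.hi k ∧ m ≠ z) := by
  have hsize := C.size k h1 hkl
  have hbs := C.box_sub h1 hkl
  rcases Nat.lt_or_ge k 2 with hk2 | hk2
  · -- k = 1
    have hk : k = 1 := by omega
    subst hk
    have hhl : C.hi 1 = C.lo 1 := by push_cast at hsize; omega
    refine ⟨C.lo 1, ⟨by omega, by omega⟩, Or.inl rfl, ?_⟩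
    intro m
    constructor
    · intro hm
      exfalso
      rw [show (1 : ℕ) - 1 = 0 from rfl] at hm
      have henv0 : env C 0 = ∅ := by simp [env]
      rw [henv0] at hm
      exact hm
    · rintro ⟨h1, h2, h3⟩
      exfalso
      omega
  · -- k ≥ 2
    have hstep := C.step (k - 1) (by omega) (by omega)
    rw [show k - 1 + 1 = k from by omega] at hstep
    have henv : env C (k - 1) = Set.Icc (C.lo (k - 1)) (C.hi (k - 1)) := by
      simp only [env, if_neg (by omega : k - 1 ≠ 0)]
    have hmono : ∀ j : ℕ, 1 ≤ j → j ≤ k - 1 → ∀ m : ℤ,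
        m ∈ Set.Icc ((C.box j).1) ((C.box j).2) →
        m ∈ Set.Icc (C.lo (k - 1)) (C.hi (k - 1)) := by
      intro j hj1 hjk m hm
      have h2 := C.box_sub hj1 (by omega)
      have h3 := C.mono hj1 hjk (by omega : k - 1 ≤ l)
      simp only [Set.mem_Icc] at hm ⊢
      omega
    have hcast : (1 : ℤ) ≤ (k : ℤ) := by exact_mod_cast h1
    rcases hstep with ⟨e1, e2⟩ | ⟨e1, e2⟩
    · -- left step, new point is lo k
      refine ⟨C.lo k, ?_, Or.inl rfl, ?_⟩
      · have hz : C.lo k ∈ Set.Icc (C.lo k) (C.hi k) := by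
          simp only [Set.mem_Icc]; omega
        rw [C.cover k h1 hkl] at hz
        simp only [Set.mem_iUnion, exists_prop] at hz
        obtain ⟨j, hj, hmem⟩ := hz
        simp only [Set.mem_Icc] at hj
        rcases Nat.lt_or_ge j k with hjk | hjk
        · exfalso
          have := hmono j hj.1 (by omega) _ hmem
          simp only [Set.mem_Icc] at this; omega
        · have : j = k := by omega
          subst this
          simpa only [Set.mem_Icc] using hmem
      · intro m
        rw [henv]
        simp only [Set.mem_Icc]
        omega
    · -- right step, new point is hi k
      refine ⟨C.hi k, ?_, Or.inr rfl, ?_⟩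
      · have hz : C.hi k ∈ Set.Icc (C.lo k) (C.hi k) := by
          simp only [Set.mem_Icc]; omega
        rw [C.cover k h1 hkl] at hz
        simp only [Set.mem_iUnion, exists_prop] at hz
        obtain ⟨j, hj, hmem⟩ := hz
        simp only [Set.mem_Icc] at hj
        rcases Nat.lt_or_ge j k with hjk | hjk
        · exfalso
          have := hmono j hj.1 (by omega) _ hmem
          simp only [Set.mem_Icc] at this; omega
        · have : j = k := by omega
          subst this
          simpa only [Set.mem_Icc] using hmem
      · intro m
        rw [henv]
        simp only [Set.mem_Icc]
        omega

theorem env_diff {k : ℕ} (h1 : 1 ≤ k) (hkl : k ≤ l) {z : ℤ}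
    (hz1 : (C.box k).1 ≤ z) (hz2 : z ≤ (C.box k).2)
    (hiff : ∀ m : ℤ, m ∈ env C (k - 1) ↔ (C.lo k ≤ m ∧ m ≤ C.hi k ∧ m ≠ z)) :
    env C k \ env C (k - 1) = {z} := by
  have hbs := C.box_sub h1 hkl
  ext m
  rw [Set.mem_diff, hiff m]
  simp only [env, if_neg (by omega : k ≠ 0), Set.mem_Icc, Set.mem_singleton_iff]
  constructor
  · rintro ⟨⟨ha, hb⟩, hc⟩
    by_contra h
    exact hc ⟨ha, hb, h⟩
  · rintro rfl
    exact ⟨⟨by omega, by omega⟩, fun h => h.2.2 rfl⟩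

end AdmissibleChain

/-- Key lemma: if `[x,y]` with `x < y` is added by a rightward step (its envelope before the
step is `[lo k, y-1]`), then the box `[x, y₋]` belongs to the (maximal) family. -/
theorem lemB {a b : ℤ} {F : Set (ℤ × ℤ)} (hF : MaxCommFamily i a b F)
    {l : ℕ} (C : AdmissibleChain i l) (hbF : boxesOf C = F)
    {k : ℕ} (hk1 : 1 ≤ k) (hkl : k ≤ l) {x y : ℤ} (hbk : C.box k = (x, y)) (hxy : x < y)
    (hyhi : C.hi k = y)
    (Henv : ∀ m : ℤ, m ∈ env C (k - 1) ↔ (C.lo k ≤ m ∧ m < y)) :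
    ∃ v : ℤ, x ≤ v ∧ v < y ∧ (x, v) ∈ F := by
  classical
  obtain ⟨hFcomm, hFrange, hFmax⟩ := hF
  have hmemxy : (x, y) ∈ F := by
    rw [← hbF]; exact ⟨k, hk1, hkl, hbk⟩
  have hcxy : i x = i y := (hFcomm.1 _ hmemxy).2
  have hbs' := C.box_sub hk1 hkl
  have hgx : C.lo k ≤ x := by have := hbs'.1; rw [hbk] at this; exact this
  have hyh : y ≤ C.hi k := by have := hbs'.2.2; rw [hbk] at this; exact this
  -- no point of color `i x` in `[lo k, x)`
  have noC : ∀ t : ℤ, C.lo k ≤ t → t < x → i t ≠ i x := by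
    intro t ht1 ht2
    rcases C.box_spec k hk1 hkl with h | h
    · exfalso
      have : x = C.lo k := by have := h.1; rw [hbk] at this; exact this
      omega
    · have h5 : ∀ t' : ℤ, C.lo k ≤ t' → t' < x → i t' ≠ i (C.hi k) := by
        intro t' u1 u2
        have hx1 : x = (C.box k).1 := by rw [hbk]
        exact h.2.2.2.2 t' u1 (by rw [← hx1]; exact u2)
      have := h5 t ht1 ht2
      rw [hyhi, ← hcxy] at this
      exact this
  -- v = the greatest point of color `i x` in `[x, y)`
  obtain ⟨v, ⟨hvx, hvy, hvc⟩, hvmax⟩ :=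
    Int.exists_greatest_of_bdd (P := fun t => x ≤ t ∧ t < y ∧ i t = i x)
      ⟨y, fun z hz => le_of_lt hz.2.1⟩ ⟨x, le_refl x, hxy, rfl⟩
  -- boxes before step k lie in [lo k, y)
  have hlt : ∀ j : ℕ, 1 ≤ j → j < k → ∀ m : ℤ, (C.box j).1 ≤ m → m ≤ (C.box j).2 →
      C.lo k ≤ m ∧ m < y := by
    intro j hj1 hjk m hm1 hm2
    have h2 := C.box_sub hj1 (by omega)
    have hsub := C.env_mono (by omega : j ≤ k - 1) (by omega : 1 ≤ k - 1)
      (by omega : k - 1 ≤ l)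
    have hmj : m ∈ env C j := by
      simp only [env, if_neg (by omega : j ≠ 0), Set.mem_Icc]; omega
    exact (Henv m).1 (hsub hmj)
  -- boxes after step k contain a point outside [lo k, y]
  have hgt : ∀ j : ℕ, k < j → j ≤ l → ∃ zj : ℤ, (C.box j).1 ≤ zj ∧ zj ≤ (C.box j).2 ∧
      (zj = C.lo j ∨ zj = C.hi j) ∧ ¬(C.lo k ≤ zj ∧ zj ≤ y) := by
    intro j hjk hjl
    obtain ⟨zj, hz1, hz2, hz3⟩ := C.newpoint (by omega : 1 ≤ j) hjl
    refine ⟨zj, hz1.1, hz1.2, hz2, ?_⟩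
    intro hzin
    have hmem : zj ∈ env C (j - 1) := by
      have hsub := C.env_mono (by omega : k ≤ j - 1) (by omega : 1 ≤ j - 1) (by omega)
      apply hsub
      simp only [env, if_neg (by omega : k ≠ 0), Set.mem_Icc]
      exact ⟨hzin.1, by omega⟩
    exact ((hz3 zj).1 hmem).2.2 rfl
  -- (x, v) commutes with everything in F
  have hkey : ∀ w ∈ F, BoxCommute i x v w.1 w.2 := by
    rintro ⟨s, t⟩ hw
    obtain ⟨j, hj1, hjl, hbj⟩ : ∃ j : ℕ, 1 ≤ j ∧ j ≤ l ∧ C.box j = (s, t) := by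
      rw [← hbF] at hw; exact hw
    have hst : s ≤ t := (hFcomm.1 _ hw).1
    have hcol : i s = i t := (hFcomm.1 _ hw).2
    have hblt : j < k → C.lo k ≤ s ∧ t < y := by
      intro hj
      have h1 := hlt j hj1 hj s (by rw [hbj]) (by rw [hbj]; exact hst)
      have h2 := hlt j hj1 hj t (by rw [hbj]; exact hst) (by rw [hbj])
      exact ⟨h1.1, h2.2⟩
    have hbeq : j = k → s = x ∧ t = y := by
      intro hj
      rw [hj, hbk] at hbj
      exact ⟨(congrArg Prod.fst hbj).symm, (congrArg Prod.snd hbj).symm⟩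
    show BoxCommute i x v s t
    rcases le_or_gt x s with hsx | hsx
    · rcases le_or_gt t v with htv | htv
      · -- (a) s ≥ x, t ≤ v
        exact Or.inl ⟨fun t' h1 h2 => absurd h2 (by omega),
          fun t' h1 h2 => absurd h2 (by omega)⟩
      · rcases lt_or_ge t y with hty | hty
        · -- (b) s ≥ x, v < t < y
          refine Or.inl ⟨fun t' h1 h2 => absurd h2 (by omega), ?_⟩
          intro t' h1 h2 hcc
          have : t' ≤ v := hvmax t' ⟨by omega, by omega, by rw [hcc, hvc]⟩
          omega
        · rcases eq_or_lt_of_le hsx with hsx' | hsx'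
          · -- (c) s = x, t ≥ y
            exact Or.inr ⟨fun t' h1 h2 => absurd h2 (by omega),
              fun t' h1 h2 => absurd h1 (by omega)⟩
          · rcases eq_or_lt_of_le hty with hty' | hty'
            · -- (d) s > x, t = y : impossible
              exfalso
              rcases Nat.lt_trichotomy j k with hj | hj | hj
              · have := hblt hj; omega
              · have := hbeq hj; omega
              · obtain ⟨zj, hz1, hz2, _, hz4⟩ := hgt j hj hjl
                rw [hbj] at hz1 hz2
                exact hz4 ⟨by omega, by omega⟩
            · -- (e) s > x, t > y
              refine Or.inr ⟨?_, fun t' h1 h2 => absurd h1 (by omega)⟩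
              rcases Nat.lt_trichotomy j k with hj | hj | hj
              · exfalso; have := hblt hj; omega
              · exfalso; have := hbeq hj; omega
              · obtain ⟨zj, hz1, hz2, hz3, hz4⟩ := hgt j hj hjl
                rw [hbj] at hz1 hz2
                have hmon := C.mono hk1 (le_of_lt hj) hjl
                have hzj : zj = C.hi j := by
                  rcases hz3 with h | h
                  · exfalso; omega
                  · exact h
                have hzgt : y < zj := by
                  by_contra h
                  exact hz4 ⟨by omega, by omega⟩
                rcases C.box_spec j (by omega) hjl with hLB | hRB
                · exfalso
                  have : s = C.lo j := by have := hLB.1; rw [hbj] at this; exact this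
                  omega
                · have hteq : t = C.hi j := by have := hRB.1; rw [hbj] at this; exact this
                  have h5 : ∀ t' : ℤ, C.lo j ≤ t' → t' < s → i t' ≠ i (C.hi j) := by
                    intro t' u1 u2
                    have hs1 : s = (C.box j).1 := by rw [hbj]
                    exact hRB.2.2.2.2 t' u1 (by rw [← hs1]; exact u2)
                  intro t' h1 h2 hcc
                  have h6 := h5 t' (by omega) h2
                  rw [← hteq] at h6
                  exact h6 (hcc.trans hcol)
    · rcases le_or_gt v t with hvt | hvt
      · -- (f) s < x, t ≥ v
        exact Or.inr ⟨fun t' h1 h2 => absurd h2 (by omega),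
          fun t' h1 h2 => absurd h2 (by omega)⟩
      · -- (g) s < x, t < v
        rcases le_or_gt (C.lo k) s with hgs | hgs
        · refine Or.inl ⟨?_, fun t' h1 h2 => absurd h2 (by omega)⟩
          intro t' h1 h2
          exact noC t' (by omega) h2
        · rcases Nat.lt_trichotomy j k with hj | hj | hj
          · exfalso; have := hblt hj; omega
          · exfalso; have := hbeq hj; omega
          · obtain ⟨zj, hz1, hz2, hz3, hz4⟩ := hgt j hj hjl
            rw [hbj] at hz1 hz2
            have hmon := C.mono hk1 (le_of_lt hj) hjl
            have hzj : zj = C.lo j := by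
              rcases hz3 with h | h
              · exact h
              · exfalso; omega
            have hzlt : zj < C.lo k := by
              by_contra h
              exact hz4 ⟨by omega, by omega⟩
            have hbsj := C.box_sub (by omega : 1 ≤ j) hjl
            have hlos : C.lo j ≤ s := by have := hbsj.1; rw [hbj] at this; exact this
            have hs_lo : s = C.lo j := by omega
            rcases C.box_spec j (by omega) hjl with hLB | hRB
            · refine Or.inr ⟨fun t' h1 h2 => absurd h2 (by omega), ?_⟩
              intro t' h1 h2 hcc
              have h5 : ∀ t' : ℤ, t < t' → t' ≤ C.hi j → i t' ≠ i (C.lo j) := by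
                intro t' u1 u2
                have ht2 : t = (C.box j).2 := by rw [hbj]
                exact hLB.2.2.2.2 t' (by rw [← ht2]; exact u1) u2
              have h6 := h5 t' h1 (by omega)
              rw [← hs_lo] at h6
              exact h6 (by rw [hcc, ← hcol])
            · exfalso
              have hteq : t = C.hi j := by have := hRB.1; rw [hbj] at this; exact this
              omega
  -- conclude by maximality
  have hcommG : CommFamily i (insert (x, v) F) := by
    constructor
    · intro p hp
      rcases Set.mem_insert_iff.1 hp with rfl | hp
      · exact ⟨hvx, hvc.symm⟩
      · exact hFcomm.1 p hp
    · intro p hp q hq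
      rcases Set.mem_insert_iff.1 hp with rfl | hp <;>
        rcases Set.mem_insert_iff.1 hq with rfl | hq
      · exact boxCommute_self _ _
      · exact hkey q hq
      · exact boxCommute_symm (hkey p hp)
      · exact hFcomm.2 p hp q hq
  have hrangeG : InRange a b (insert (x, v) F) := by
    intro p hp
    rcases Set.mem_insert_iff.1 hp with rfl | hp
    · exact ⟨(hFrange _ hmemxy).1, le_trans (le_of_lt hvy) (hFrange _ hmemxy).2⟩
    · exact hFrange p hp
  have heq := hFmax _ hcommG hrangeG (Set.subset_insert _ _)
  refine ⟨v, hvx, hvy, ?_⟩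
  rw [heq]
  exact Set.mem_insert _ _

/-- The envelope-step of any admissible chain realizing `F` at the box `[x,y]` is determined
by whether `F` contains a box of the form `[x,t]` with `t < y`. -/
theorem env_step {a b : ℤ} {F : Set (ℤ × ℤ)} (hF : MaxCommFamily i a b F)
    {l : ℕ} (C : AdmissibleChain i l) (hbF : boxesOf C = F)
    {k : ℕ} (hk1 : 1 ≤ k) (hkl : k ≤ l) {x y : ℤ} (hbk : C.box k = (x, y)) :
    (¬(∃ t : ℤ, t < y ∧ (x, t) ∈ F) → env C k \ env C (k - 1) = {x}) ∧
    ((∃ t : ℤ, t < y ∧ (x, t) ∈ F) → env C k \ env C (k - 1) = {y}) := by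
  obtain ⟨z, hzb, hor, hiff⟩ := C.newpoint hk1 hkl
  have hz1 : x ≤ z := by have := hzb.1; rw [hbk] at this; exact this
  have hz2 : z ≤ y := by have := hzb.2; rw [hbk] at this; exact this
  have hbs' := C.box_sub hk1 hkl
  have hbs1 : C.lo k ≤ x := by have := hbs'.1; rw [hbk] at this; exact this
  have hbs3 : y ≤ C.hi k := by have := hbs'.2.2; rw [hbk] at this; exact this
  have hdiff : env C k \ env C (k - 1) = {z} :=
    C.env_diff hk1 hkl hzb.1 hzb.2 hiff
  -- if the new point is the left end of the envelope, then no `(x,t)` with `t < y` is in `F`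
  have hnotQ : z = C.lo k → ¬(∃ t : ℤ, t < y ∧ (x, t) ∈ F) := by
    intro hz hQ
    have hzx : z = x := by omega
    obtain ⟨t, hty, htF⟩ := hQ
    obtain ⟨j, hj1, hjl, hbj⟩ : ∃ j : ℕ, 1 ≤ j ∧ j ≤ l ∧ C.box j = (x, t) := by
      rw [← hbF] at htF; exact htF
    have hxt : x ≤ t := (hF.1.1 _ htF).1
    rcases Nat.lt_trichotomy j k with hj | hj | hj
    · have hxin : x ∈ env C (k - 1) := by
        apply C.env_mono (by omega : j ≤ k - 1) (by omega) (by omega)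
        have hbsj := C.box_sub hj1 (by omega)
        have e1 : C.lo j ≤ x := by have := hbsj.1; rw [hbj] at this; exact this
        have e2 : t ≤ C.hi j := by have := hbsj.2.2; rw [hbj] at this; exact this
        simp only [env, if_neg (by omega : j ≠ 0), Set.mem_Icc]
        omega
      have := (hiff x).1 hxin
      omega
    · rw [hj, hbk] at hbj
      have : y = t := congrArg Prod.snd hbj
      omega
    · obtain ⟨zj, hzjb, _, hiffj⟩ := C.newpoint (by omega : 1 ≤ j) (by omega)
      have e1 : x ≤ zj := by have := hzjb.1; rw [hbj] at this; exact this
      have e2 : zj ≤ t := by have := hzjb.2; rw [hbj] at this; exact this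
      have hzjin : zj ∈ env C (j - 1) := by
        apply C.env_mono (by omega : k ≤ j - 1) (by omega) (by omega)
        simp only [env, if_neg (by omega : k ≠ 0), Set.mem_Icc]
        omega
      exact ((hiffj zj).1 hzjin).2.2 rfl
  constructor
  · intro hQ
    rcases hor with hz | hz
    · have : z = x := by omega
      rw [hdiff, this]
    · have hzy : z = y := by omega
      rcases eq_or_lt_of_le (le_trans hz1 hz2 : x ≤ y) with hxy | hxy
      · rw [hdiff, hzy, ← hxy]
      · exfalso
        have Henv : ∀ m : ℤ, m ∈ env C (k - 1) ↔ (C.lo k ≤ m ∧ m < y) := by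
          intro m
          rw [hiff m]
          constructor <;> intro h <;> omega
        obtain ⟨v, hv1, hv2, hv3⟩ := lemB hF C hbF hk1 hkl hbk hxy (by omega) Henv
        exact hQ ⟨v, hv2, hv3⟩
  · intro hQ
    rcases hor with hz | hz
    · exact absurd hQ (hnotQ hz)
    · have hzy : z = y := by omega
      rw [hdiff, hzy]

/-! ### Existence of an admissible chain realizing a maximal commuting family -/

theorem singleton_family {a : ℤ} {F : Set (ℤ × ℤ)}
    (hF : MaxCommFamily i a a F) : F = {(a, a)} := by
  have hsub : ∀ p ∈ F, p = (a, a) := by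
    rintro ⟨p1, p2⟩ hp
    have h1a : a ≤ p1 := (hF.2.1 _ hp).1
    have h1b : p2 ≤ a := (hF.2.1 _ hp).2
    have h2 : p1 ≤ p2 := (hF.1.1 _ hp).1
    have e1 : p1 = a := by omega
    have e2 : p2 = a := by omega
    rw [e1, e2]
  have hcomm : CommFamily i (insert (a, a) F) := by
    constructor
    · intro p hp
      rcases Set.mem_insert_iff.1 hp with rfl | hp
      · exact ⟨le_refl _, rfl⟩
      · exact hF.1.1 p hp
    · intro p hp q hq
      have hp' : p = (a, a) := by
        rcases Set.mem_insert_iff.1 hp with rfl | hp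
        · rfl
        · exact hsub p hp
      have hq' : q = (a, a) := by
        rcases Set.mem_insert_iff.1 hq with rfl | hq
        · rfl
        · exact hsub q hq
      rw [hp', hq']
      exact boxCommute_self _ _
  have hrange : InRange a a (insert (a, a) F) := by
    intro p hp
    rcases Set.mem_insert_iff.1 hp with rfl | hp
    · exact ⟨le_refl _, le_refl _⟩
    · exact hF.2.1 p hp
  have heq := hF.2.2 _ hcomm hrange (Set.subset_insert _ _)
  have hmem : (a, a) ∈ F := by rw [heq]; exact Set.mem_insert _ _
  apply Set.Subset.antisymm
  · intro p hp; exact hsub p hp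
  · intro p hp
    rw [Set.mem_singleton_iff] at hp
    rw [hp]; exact hmem

/-- The maximal L-box of `[a,b]` belongs to any maximal commuting family, and commutes
with every box in range. -/
theorem maxL {a b : ℤ} {F : Set (ℤ × ℤ)} (hab : a ≤ b) (hF : MaxCommFamily i a b F) :
    ∃ v : ℤ, a ≤ v ∧ v ≤ b ∧ i v = i a ∧ (∀ t : ℤ, a ≤ t → t ≤ b → i t = i a → t ≤ v) ∧
      (∀ s t : ℤ, a ≤ s → t ≤ b → BoxCommute i a v s t) ∧ (a, v) ∈ F := by
  obtain ⟨v, ⟨hva, hvb, hvc⟩, hvmax⟩ :=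
    Int.exists_greatest_of_bdd (P := fun t => a ≤ t ∧ t ≤ b ∧ i t = i a)
      ⟨b, fun z hz => hz.2.1⟩ ⟨a, le_refl a, hab, rfl⟩
  have hvm : ∀ t : ℤ, a ≤ t → t ≤ b → i t = i a → t ≤ v := fun t h1 h2 h3 =>
    hvmax t ⟨h1, h2, h3⟩
  have hcomm : ∀ s t : ℤ, a ≤ s → t ≤ b → BoxCommute i a v s t := by
    intro s t hs ht
    refine Or.inl ⟨fun t' h1 h2 => absurd h2 (by omega), ?_⟩
    intro t' h1 h2 hcc
    have : t' ≤ v := hvm t' (by omega) (by omega) (by rw [hcc, hvc])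
    omega
  refine ⟨v, hva, hvb, hvc, hvm, hcomm, ?_⟩
  have hcommG : CommFamily i (insert (a, v) F) := by
    constructor
    · intro p hp
      rcases Set.mem_insert_iff.1 hp with rfl | hp
      · exact ⟨hva, hvc.symm⟩
      · exact hF.1.1 p hp
    · intro p hp q hq
      rcases Set.mem_insert_iff.1 hp with rfl | hp <;>
        rcases Set.mem_insert_iff.1 hq with rfl | hq
      · exact hcomm a v (le_refl a) hvb
      · exact hcomm q.1 q.2 (hF.2.1 q hq).1 (hF.2.1 q hq).2
      · exact boxCommute_symm (hcomm p.1 p.2 (hF.2.1 p hp).1 (hF.2.1 p hp).2)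
      · exact hF.1.2 p hp q hq
  have hrangeG : InRange a b (insert (a, v) F) := by
    intro p hp
    rcases Set.mem_insert_iff.1 hp with rfl | hp
    · exact ⟨le_refl _, hvb⟩
    · exact hF.2.1 p hp
  have heq := hF.2.2 _ hcommG hrangeG (Set.subset_insert _ _)
  rw [heq]; exact Set.mem_insert _ _

/-- The maximal R-box of `[a,b]` belongs to any maximal commuting family, and commutes
with every box in range. -/
theorem maxR {a b : ℤ} {F : Set (ℤ × ℤ)} (hab : a ≤ b) (hF : MaxCommFamily i a b F) :
    ∃ u : ℤ, a ≤ u ∧ u ≤ b ∧ i u = i b ∧ (∀ t : ℤ, a ≤ t → t ≤ b → i t = i b → u ≤ t) ∧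
      (∀ s t : ℤ, a ≤ s → t ≤ b → BoxCommute i u b s t) ∧ (u, b) ∈ F := by
  obtain ⟨u, ⟨hua, hub, huc⟩, humin⟩ :=
    Int.exists_least_of_bdd (P := fun t => a ≤ t ∧ t ≤ b ∧ i t = i b)
      ⟨a, fun z hz => hz.1⟩ ⟨b, hab, le_refl b, rfl⟩
  have hum : ∀ t : ℤ, a ≤ t → t ≤ b → i t = i b → u ≤ t := fun t h1 h2 h3 =>
    humin t ⟨h1, h2, h3⟩
  have hcomm : ∀ s t : ℤ, a ≤ s → t ≤ b → BoxCommute i u b s t := by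
    intro s t hs ht
    refine Or.inl ⟨?_, fun t' h1 h2 => absurd h2 (by omega)⟩
    intro t' h1 h2 hcc
    have : u ≤ t' := hum t' (by omega) (by omega) (by rw [hcc, huc])
    omega
  refine ⟨u, hua, hub, huc, hum, hcomm, ?_⟩
  have hcommG : CommFamily i (insert (u, b) F) := by
    constructor
    · intro p hp
      rcases Set.mem_insert_iff.1 hp with rfl | hp
      · exact ⟨hub, huc⟩
      · exact hF.1.1 p hp
    · intro p hp q hq
      rcases Set.mem_insert_iff.1 hp with rfl | hp <;>
        rcases Set.mem_insert_iff.1 hq with rfl | hq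
      · exact hcomm u b hua (le_refl b)
      · exact hcomm q.1 q.2 (hF.2.1 q hq).1 (hF.2.1 q hq).2
      · exact boxCommute_symm (hcomm p.1 p.2 (hF.2.1 p hp).1 (hF.2.1 p hp).2)
      · exact hF.1.2 p hp q hq
  have hrangeG : InRange a b (insert (u, b) F) := by
    intro p hp
    rcases Set.mem_insert_iff.1 hp with rfl | hp
    · exact ⟨hua, le_refl _⟩
    · exact hF.2.1 p hp
  have heq := hF.2.2 _ hcommG hrangeG (Set.subset_insert _ _)
  rw [heq]; exact Set.mem_insert _ _

/-- Removing a "corner" box of a maximal family leaves a maximal family on a smaller interval. -/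
theorem peel {a b a' b' : ℤ} {F : Set (ℤ × ℤ)} (hF : MaxCommFamily i a b F)
    {p : ℤ × ℤ} (hpF : p ∈ F)
    (hcomm : ∀ s t : ℤ, a ≤ s → t ≤ b → BoxCommute i p.1 p.2 s t)
    (hsub : a ≤ a' ∧ b' ≤ b)
    (hrange' : ∀ q ∈ F, q ≠ p → a' ≤ q.1 ∧ q.2 ≤ b')
    (hp_out : ¬(a' ≤ p.1 ∧ p.2 ≤ b')) :
    MaxCommFamily i a' b' (F \ {p}) := by
  refine ⟨⟨fun q hq => hF.1.1 q hq.1, fun q hq r hr => hF.1.2 q hq.1 r hr.1⟩, ?_, ?_⟩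
  · intro q hq
    exact hrange' q hq.1 hq.2
  · intro G hGc hGr hFG
    have hcommG' : CommFamily i (insert p G) := by
      constructor
      · intro q hq
        rcases Set.mem_insert_iff.1 hq with hq' | hq'
        · rw [hq']; exact hF.1.1 p hpF
        · exact hGc.1 q hq'
      · intro q hq r hr
        rcases Set.mem_insert_iff.1 hq with hq' | hq' <;>
          rcases Set.mem_insert_iff.1 hr with hr' | hr'
        · rw [hq', hr']; exact hcomm p.1 p.2 (hF.2.1 p hpF).1 (hF.2.1 p hpF).2
        · rw [hq']
          exact hcomm r.1 r.2 (by have := (hGr r hr').1; omega) (by have := (hGr r hr').2; omega)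
        · rw [hr']
          exact boxCommute_symm
            (hcomm q.1 q.2 (by have := (hGr q hq').1; omega) (by have := (hGr q hq').2; omega))
        · exact hGc.2 q hq' r hr'
    have hrangeG' : InRange a b (insert p G) := by
      intro q hq
      rcases Set.mem_insert_iff.1 hq with hq' | hq'
      · rw [hq']; exact hF.2.1 p hpF
      · exact ⟨by have := (hGr q hq').1; omega, by have := (hGr q hq').2; omega⟩
    have hFsub : F ⊆ insert p G := by
      intro q hq
      by_cases hqp : q = p
      · rw [hqp]; exact Set.mem_insert _ _
      · exact Set.mem_insert_iff.2 (Or.inr (hFG ⟨hq, hqp⟩))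
    have heq := hF.2.2 _ hcommG' hrangeG' hFsub
    apply Set.Subset.antisymm hFG
    intro g hg
    have hgF : g ∈ F := by rw [heq]; exact Set.mem_insert_iff.2 (Or.inr hg)
    have hgp : g ≠ p := by
      intro h
      exact hp_out (h ▸ hGr g hg)
    exact ⟨hgF, hgp⟩

/-- Extending an admissible chain by one step. -/
theorem extend_chain {l' : ℕ} (C' : AdmissibleChain i l') (hl' : 1 ≤ l')
    {a' b' a b : ℤ} (hlo : C'.lo l' = a') (hhi : C'.hi l' = b')
    (p : ℤ × ℤ)
    (hstep : (a = a' - 1 ∧ b = b') ∨ (a = a' ∧ b = b' + 1))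
    (hspec : IsLBox i a b p ∨ IsRBox i a b p)
    (hpmem : a ≤ p.1 ∧ p.1 ≤ p.2 ∧ p.2 ≤ b)
    (hcov : ∀ m : ℤ, a ≤ m → m ≤ b → (a' ≤ m ∧ m ≤ b') ∨ (p.1 ≤ m ∧ m ≤ p.2)) :
    ∃ C : AdmissibleChain i (l' + 1),
      C.lo (l' + 1) = a ∧ C.hi (l' + 1) = b ∧ boxesOf C = insert p (boxesOf C') := by
  have hsz := C'.size l' hl' (le_refl _)
  refine ⟨⟨fun k => if k ≤ l' then C'.lo k else a,
          fun k => if k ≤ l' then C'.hi k else b,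
          fun k => if k ≤ l' then C'.box k else p, ?_, ?_, ?_, ?_⟩, ?_, ?_, ?_⟩
  · -- size
    intro k h1 hk
    by_cases h : k ≤ l'
    · simp only [if_pos h]
      exact C'.size k h1 h
    · have hk' : k = l' + 1 := by omega
      simp only [if_neg h]
      rw [hlo, hhi] at hsz
      rcases hstep with ⟨e1, e2⟩ | ⟨e1, e2⟩ <;> subst hk' <;> push_cast <;> omega
  · -- step
    intro k h1 hk
    by_cases h : k + 1 ≤ l'
    · simp only [if_pos h, if_pos (by omega : k ≤ l')]
      exact C'.step k h1 (by omega)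
    · have hk' : k = l' := by omega
      rw [hk']
      simp only [if_neg (by omega : ¬ l' + 1 ≤ l'), if_pos (le_refl l'), hlo, hhi]
      rcases hstep with ⟨e1, e2⟩ | ⟨e1, e2⟩
      · exact Or.inl ⟨by omega, by omega⟩
      · exact Or.inr ⟨by omega, by omega⟩
  · -- box_spec
    intro k h1 hk
    by_cases h : k ≤ l'
    · simp only [if_pos h]
      exact C'.box_spec k h1 h
    · simp only [if_neg h]
      exact hspec
  · -- cover
    intro k h1 hk
    by_cases h : k ≤ l'
    · simp only [if_pos h]
      rw [C'.cover k h1 h]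
      refine Set.iUnion₂_congr ?_
      intro j hj
      rw [if_pos (le_trans (Set.mem_Icc.1 hj).2 h)]
    · have hk' : k = l' + 1 := by omega
      subst hk'
      simp only [if_neg h]
      ext m
      simp only [Set.mem_Icc, Set.mem_iUnion, exists_prop]
      constructor
      · rintro ⟨hm1, hm2⟩
        rcases hcov m hm1 hm2 with ⟨hm3, hm4⟩ | ⟨hm3, hm4⟩
        · have : m ∈ Set.Icc (C'.lo l') (C'.hi l') := by
            simp only [Set.mem_Icc]; omega
          rw [C'.cover l' hl' (le_refl _)] at this
          simp only [Set.mem_iUnion, exists_prop] at this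
          obtain ⟨j, hj, hmem⟩ := this
          obtain ⟨hj1, hj2⟩ := Set.mem_Icc.1 hj
          refine ⟨j, Set.mem_Icc.2 ⟨hj1, by omega⟩, ?_⟩
          rw [if_pos hj2]
          exact hmem
        · refine ⟨l' + 1, Set.mem_Icc.2 ⟨by omega, le_refl _⟩, ?_⟩
          rw [if_neg (by omega : ¬ l' + 1 ≤ l')]
          exact ⟨hm3, hm4⟩
      · rintro ⟨j, hj, hmem⟩
        obtain ⟨hjm1, hjm2⟩ := Set.mem_Icc.1 hj
        by_cases hjl : j ≤ l'
        · rw [if_pos hjl] at hmem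
          have hsub : Set.Icc ((C'.box j).1) ((C'.box j).2) ⊆ Set.Icc (C'.lo l') (C'.hi l') := by
            rw [C'.cover l' hl' (le_refl _)]
            intro n hn
            simp only [Set.mem_iUnion, exists_prop]
            exact ⟨j, Set.mem_Icc.2 ⟨hjm1, hjl⟩, hn⟩
          have := hsub hmem
          simp only [Set.mem_Icc] at this
          rcases hstep with ⟨e1, e2⟩ | ⟨e1, e2⟩ <;> omega
        · rw [if_neg hjl] at hmem
          obtain ⟨hmm1, hmm2⟩ := hmem
          omega
  · show (if l' + 1 ≤ l' then C'.lo (l' + 1) else a) = a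
    rw [if_neg (by omega : ¬ l' + 1 ≤ l')]
  · show (if l' + 1 ≤ l' then C'.hi (l' + 1) else b) = b
    rw [if_neg (by omega : ¬ l' + 1 ≤ l')]
  · -- boxesOf
    ext q
    simp only [boxesOf, Set.mem_setOf_eq, Set.mem_insert_iff]
    constructor
    · rintro ⟨k, h1, hk, hbk⟩
      by_cases h : k ≤ l'
      · rw [if_pos h] at hbk
        exact Or.inr ⟨k, h1, h, hbk⟩
      · rw [if_neg h] at hbk
        exact Or.inl hbk.symm
    · rintro (rfl | ⟨k, h1, hk, hbk⟩)
      · exact ⟨l' + 1, by omega, le_refl _, by rw [if_neg (by omega : ¬ l' + 1 ≤ l')]⟩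
      · exact ⟨k, h1, by omega, by rw [if_pos hk]; exact hbk⟩

/-- Every maximal commuting family in `[a,b]` is the set of boxes of some admissible chain. -/
theorem chain_exists : ∀ (n : ℕ) (a b : ℤ) (F : Set (ℤ × ℤ)), b = a + n →
    MaxCommFamily i a b F →
    ∃ (l : ℕ) (C : AdmissibleChain i l), 1 ≤ l ∧ C.lo l = a ∧ C.hi l = b ∧ boxesOf C = F := by
  intro n
  induction n with
  | zero =>
    intro a b F hab hF
    have hba : a = b := by push_cast at hab; omega
    subst hba
    have hFa : F = {(a, a)} := singleton_family hF
    refine ⟨1, ⟨fun _ => a, fun _ => a, fun _ => (a, a), ?_, ?_, ?_, ?_⟩, le_refl _, rfl, rfl, ?_⟩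
    · intro k h1 hk
      have : k = 1 := by omega
      subst this
      show a = a + ((1 : ℕ) : ℤ) - 1
      push_cast; ring
    · intro k h1 hk
      exact absurd hk (by omega)
    · intro k h1 hk
      exact Or.inl ⟨rfl, le_refl _, le_refl _, rfl,
        fun t ht1 ht2 => absurd (lt_of_lt_of_le ht1 ht2) (lt_irrefl a)⟩
    · intro k h1 hk
      have : k = 1 := by omega
      subst this
      ext m
      simp only [Set.mem_Icc, Set.mem_iUnion, exists_prop]
      constructor
      · intro h
        exact ⟨1, ⟨le_refl _, le_refl _⟩, by simpa only [Set.mem_Icc] using h⟩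
      · rintro ⟨j, _, h⟩
        simpa only [Set.mem_Icc] using h
    · rw [hFa]
      ext q
      simp only [boxesOf, Set.mem_setOf_eq, Set.mem_singleton_iff]
      constructor
      · rintro ⟨k, _, _, hk⟩; exact hk.symm
      · rintro rfl; exact ⟨1, le_refl _, le_refl _, rfl⟩
  | succ n ih =>
    intro a b F hab hF
    have hab' : a < b := by push_cast at hab; omega
    obtain ⟨v, hva, hvb, hvc, hvmax, hvcomm, hvF⟩ := maxL (le_of_lt hab') hF
    by_cases hL : ∀ q ∈ F, q.1 = a → q = (a, v)
    · -- peel the box (a, v) on the left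
      have hF' : MaxCommFamily i (a + 1) b (F \ {(a, v)}) := by
        refine peel hF hvF hvcomm ⟨by omega, le_refl _⟩ ?_
          (fun h => by have h1 : a + 1 ≤ a := h.1; omega)
        intro q hq hqp
        refine ⟨?_, (hF.2.1 q hq).2⟩
        have h1 := (hF.2.1 q hq).1
        rcases eq_or_lt_of_le h1 with h | h
        · exact absurd (hL q hq h.symm) hqp
        · omega
      obtain ⟨l', C', hl', hlo', hhi', hbox'⟩ :=
        ih (a + 1) b (F \ {(a, v)}) (by push_cast at hab ⊢; omega) hF'
      obtain ⟨C, hCl, hCh, hCb⟩ := extend_chain C' hl' hlo' hhi' (a, v)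
        (Or.inl ⟨by ring, rfl⟩)
        (Or.inl ⟨rfl, hva, hvb, hvc, fun t ht1 ht2 hc => by
          have h1 : v < t := ht1
          exact absurd (hvmax t (by omega) ht2 hc) (by omega)⟩)
        ⟨le_refl _, hva, hvb⟩
        (by
          intro m hm1 hm2
          rcases le_or_gt (a + 1) m with h | h
          · exact Or.inl ⟨h, hm2⟩
          · exact Or.inr ⟨show a ≤ m by omega, show m ≤ v by omega⟩)
      refine ⟨l' + 1, C, by omega, hCl, hCh, ?_⟩
      rw [hCb, hbox', Set.insert_diff_singleton, Set.insert_eq_self.2 hvF]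
    · -- peel the box (u, b) on the right
      obtain ⟨u, hua, hub, huc, humin, hucomm, huF⟩ := maxR (le_of_lt hab') hF
      push_neg at hL
      obtain ⟨q, hqF, hq1, hqne⟩ := hL
      have hR : ∀ r ∈ F, r.2 = b → r = (u, b) := by
        intro r hrF hr2
        by_contra hrne
        have hbq := hF.1.1 q hqF
        have hbq1 : q.1 ≤ q.2 := hbq.1
        have hrq := hF.2.1 q hqF
        have hbr := hF.1.1 r hrF
        have hbr1 : r.1 ≤ r.2 := hbr.1
        have hrr := hF.2.1 r hrF
        have hiq : i q.2 = i a := by rw [← hq1]; exact hbq.2.symm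
        have hwv : q.2 ≤ v := hvmax q.2 (by omega) hrq.2 hiq
        have hwv' : q.2 < v := by
          rcases eq_or_lt_of_le hwv with h | h
          · exact absurd (Prod.ext_iff.2 ⟨hq1, h⟩) hqne
          · exact h
        have hiu : i r.1 = i b := by rw [← hr2]; exact hbr.2
        have huu : u ≤ r.1 := humin r.1 hrr.1 (by omega) hiu
        have huu' : u < r.1 := by
          rcases eq_or_lt_of_le huu with h | h
          · exact absurd (Prod.ext_iff.2 ⟨h.symm, hr2⟩) hrne
          · exact h
        rcases hF.1.2 q hqF r hrF with ⟨h1, h2⟩ | ⟨h1, h2⟩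
        · refine h2 v (by omega) (by omega) ?_
          rw [hvc]; exact hiq.symm
        · refine h1 u (by omega) (by omega) ?_
          rw [huc]; exact hiu.symm
      have hF' : MaxCommFamily i a (b - 1) (F \ {(u, b)}) := by
        refine peel hF huF hucomm ⟨le_refl _, by omega⟩ ?_
          (fun h => by have h2 : b ≤ b - 1 := h.2; omega)
        intro r hr hrp
        refine ⟨(hF.2.1 r hr).1, ?_⟩
        have h1 := (hF.2.1 r hr).2
        rcases eq_or_lt_of_le h1 with h | h
        · exact absurd (hR r hr h) hrp
        · omega
      obtain ⟨l', C', hl', hlo', hhi', hbox'⟩ :=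
        ih a (b - 1) (F \ {(u, b)}) (by push_cast at hab ⊢; omega) hF'
      obtain ⟨C, hCl, hCh, hCb⟩ := extend_chain C' hl' hlo' hhi' (u, b)
        (Or.inr ⟨rfl, by ring⟩)
        (Or.inr ⟨rfl, hua, hub, huc, fun t ht1 ht2 hc => by
          have h2 : t < u := ht2
          exact absurd (humin t ht1 (by omega) hc) (by omega)⟩)
        ⟨hua, hub, le_refl _⟩
        (by
          intro m hm1 hm2
          rcases le_or_gt m (b - 1) with h | h
          · exact Or.inl ⟨hm1, h⟩
          · exact Or.inr ⟨show u ≤ m by omega, show m ≤ b by omega⟩)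
      refine ⟨l' + 1, C, by omega, hCl, hCh, ?_⟩
      rw [hCb, hbox', Set.insert_diff_singleton, Set.insert_eq_self.2 huF]

end Aux

/-- Every box of a maximal commuting family in `[a,b]` has a unique effective end. -/
theorem effectiveEnd_exists_unique (i : ℤ → I) (a b : ℤ) (hab : a ≤ b)
    (F : Set (ℤ × ℤ)) (hF : MaxCommFamily i a b F) (x y : ℤ) (hxy : (x, y) ∈ F) :
    ∃! z : ℤ, IsEffectiveEnd i a b F x y z := by
  classical
  obtain ⟨l, C₀, hl1, hlo₀, hhi₀, hbF₀⟩ := chain_exists (b - a).toNat a b F (by omega) hF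
  obtain ⟨k₀, hk₀1, hk₀l, hbk₀⟩ : ∃ k : ℕ, 1 ≤ k ∧ k ≤ l ∧ C₀.box k = (x, y) := by
    rw [← hbF₀] at hxy; exact hxy
  by_cases hQ : ∃ t : ℤ, t < y ∧ (x, t) ∈ F
  · refine ⟨y, ⟨by simp, ?_⟩, ?_⟩
    · intro l' C hlo hhi hbF k hk1 hkl hbk
      exact ((env_step hF C hbF hk1 hkl hbk).2 hQ).symm
    · intro z' hz'
      have h1 := hz'.2 l C₀ hlo₀ hhi₀ hbF₀ k₀ hk₀1 hk₀l hbk₀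
      have h2 := (env_step hF C₀ hbF₀ hk₀1 hk₀l hbk₀).2 hQ
      have : ({z'} : Set ℤ) = {y} := by rw [h1, h2]
      exact Set.singleton_eq_singleton_iff.1 this
  · refine ⟨x, ⟨by simp, ?_⟩, ?_⟩
    · intro l' C hlo hhi hbF k hk1 hkl hbk
      exact ((env_step hF C hbF hk1 hkl hbk).1 hQ).symm
    · intro z' hz'
      have h1 := hz'.2 l C₀ hlo₀ hhi₀ hbF₀ k₀ hk₀1 hk₀l hbk₀
      have h2 := (env_step hF C₀ hbF₀ hk₀1 hk₀l hbk₀).1 hQ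
      have : ({z'} : Set ℤ) = {x} := by rw [h1, h2]
      exact Set.singleton_eq_singleton_iff.1 this

end IBoxes
end

section
/- Let 𝔉 be a maximal commuting family of i-boxes in [a,b] and [x,y] ∈ 𝔉. Then the following are equivalent: (a) y is the effective end of [x,y]; (b) x = y or there exists [x,y'] ∈ 𝔉 with y' < y; (c) there is no [x',y] ∈ 𝔉 with x < x'. -/
namespace IBoxes

variable {I : Type*}

section ChainLemmas

variable {i : ℤ → I} {l : ℕ} (C : AdmissibleChain i l)

lemma lo_le_hi {k : ℕ} (h1 : 1 ≤ k) (h2 : k ≤ l) : C.lo k ≤ C.hi k := by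
  have h := C.size k h1 h2
  have h' : (1 : ℤ) ≤ (k : ℤ) := by exact_mod_cast h1
  omega

lemma mono_lo_hi {j k : ℕ} (hj : 1 ≤ j) (hjk : j ≤ k) (hk : k ≤ l) :
    C.lo k ≤ C.lo j ∧ C.hi j ≤ C.hi k := by
  induction k with
  | zero => omega
  | succ m ih =>
    rcases Nat.lt_or_ge j (m+1) with h | h
    · have ihm := ih (by omega) (by omega)
      rcases C.step m (by omega) (by omega) with ⟨e1, e2⟩ | ⟨e1, e2⟩ <;>
        exact ⟨by omega, by omega⟩
    · have hjm : j = m + 1 := by omega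
      subst hjm; exact ⟨le_refl _, le_refl _⟩

lemma box_bounds {k : ℕ} (h1 : 1 ≤ k) (h2 : k ≤ l) :
    C.lo k ≤ (C.box k).1 ∧ (C.box k).1 ≤ (C.box k).2 ∧ (C.box k).2 ≤ C.hi k := by
  rcases C.box_spec k h1 h2 with ⟨ha, hb, hc, _⟩ | ⟨ha, hb, hc, _⟩ <;>
    exact ⟨by omega, by omega, by omega⟩

lemma env_eq {k : ℕ} (h : k ≠ 0) : env C k = Set.Icc (C.lo k) (C.hi k) := by
  simp [env, h]

lemma env_mono {j k : ℕ} (hjk : j ≤ k) (hk : k ≤ l) : env C j ⊆ env C k := by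
  rcases Nat.eq_zero_or_pos j with h | h
  · subst h; simp [env]
  · rw [env_eq C (by omega), env_eq C (by omega)]
    have h2 := mono_lo_hi C (j := j) (k := k) (by omega) hjk hk
    exact Set.Icc_subset_Icc h2.1 h2.2

lemma exists_new {k : ℕ} (h1 : 1 ≤ k) (h2 : k ≤ l) :
    ∃ z : ℤ,
      env C k \ env C (k-1) = {z} ∧
      z ∉ env C (k-1) ∧
      (C.box k).1 ≤ z ∧ z ≤ (C.box k).2 ∧
      (z = (C.box k).1 ∨ z = (C.box k).2) ∧
      ((k = 1 ∧ z = C.lo k ∧ z = C.hi k) ∨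
       (2 ≤ k ∧ z = C.lo k ∧ C.lo k = C.lo (k-1) - 1 ∧ C.hi k = C.hi (k-1)) ∨
       (2 ≤ k ∧ z = C.hi k ∧ C.hi k = C.hi (k-1) + 1 ∧ C.lo k = C.lo (k-1))) := by
  have hbox : ∀ z : ℤ, z ∈ Set.Icc (C.lo k) (C.hi k) → z ∉ env C (k-1) →
      (C.box k).1 ≤ z ∧ z ≤ (C.box k).2 := by
    intro z hz hz'
    rw [C.cover k h1 h2] at hz
    simp only [Set.mem_iUnion, Set.mem_Icc, exists_prop] at hz
    obtain ⟨j, ⟨hj1, hjk⟩, hzj⟩ := hz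
    rcases Nat.lt_or_ge j k with hlt | hge
    · exfalso
      apply hz'
      have hb := box_bounds C (k := j) hj1 (by omega)
      have hjenv : z ∈ env C j := by
        rw [env_eq C (by omega)]
        exact Set.mem_Icc.2 ⟨by omega, by omega⟩
      exact env_mono C (by omega) (by omega) hjenv
    · have hjk' : j = k := by omega
      subst hjk'; exact hzj
  have hlohi := lo_le_hi C h1 h2
  have hbb := box_bounds C h1 h2
  rcases Nat.lt_or_ge k 2 with hklt | hk2
  · have hk : k = 1 := by omega
    subst hk
    have hs := C.size 1 le_rfl h2
    have hhl : C.hi 1 = C.lo 1 := by push_cast at hs; omega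
    have henv0 : env C (1-1) = (∅ : Set ℤ) := by simp [env]
    have henv1 : env C 1 = Set.Icc (C.lo 1) (C.hi 1) := env_eq C one_ne_zero
    have hzmem : C.lo 1 ∈ Set.Icc (C.lo 1) (C.hi 1) := Set.mem_Icc.2 ⟨le_rfl, hlohi⟩
    have hnot : C.lo 1 ∉ env C (1-1) := by rw [henv0]; exact Set.notMem_empty _
    obtain ⟨hb1, hb2⟩ := hbox (C.lo 1) hzmem hnot
    refine ⟨C.lo 1, ?_, hnot, hb1, hb2, by omega, Or.inl ⟨rfl, rfl, hhl.symm⟩⟩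
    rw [henv0, henv1, Set.diff_empty, hhl, Set.Icc_self]
  · have hm : k - 1 + 1 = k := by omega
    have hstep := C.step (k-1) (by omega) (by omega)
    rw [hm] at hstep
    have hlohi' := lo_le_hi C (k := k-1) (by omega) (by omega)
    have henv' : env C (k-1) = Set.Icc (C.lo (k-1)) (C.hi (k-1)) := env_eq C (by omega)
    have henv : env C k = Set.Icc (C.lo k) (C.hi k) := env_eq C (by omega)
    rcases hstep with ⟨hl, hh⟩ | ⟨hl, hh⟩
    · have hnot : C.lo k ∉ env C (k-1) := by rw [henv']; simp [Set.mem_Icc]; omega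
      obtain ⟨hb1, hb2⟩ := hbox (C.lo k) (Set.mem_Icc.2 ⟨le_rfl, hlohi⟩) hnot
      refine ⟨C.lo k, ?_, hnot, hb1, hb2, by omega,
        Or.inr (Or.inl ⟨hk2, rfl, hl, hh⟩)⟩
      rw [henv, henv']
      ext t
      simp only [Set.mem_diff, Set.mem_Icc, Set.mem_singleton_iff, not_and, not_le]
      constructor
      · rintro ⟨⟨ht1, ht2⟩, ht3⟩
        by_contra hne
        have := ht3 (by omega)
        omega
      · intro ht; subst ht
        exact ⟨⟨le_rfl, hlohi⟩, fun h => by omega⟩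
    · have hnot : C.hi k ∉ env C (k-1) := by rw [henv']; simp [Set.mem_Icc]; omega
      obtain ⟨hb1, hb2⟩ := hbox (C.hi k) (Set.mem_Icc.2 ⟨hlohi, le_rfl⟩) hnot
      refine ⟨C.hi k, ?_, hnot, hb1, hb2, by omega,
        Or.inr (Or.inr ⟨hk2, rfl, hh, hl⟩)⟩
      rw [henv, henv']
      ext t
      simp only [Set.mem_diff, Set.mem_Icc, Set.mem_singleton_iff, not_and, not_le]
      constructor
      · rintro ⟨⟨ht1, ht2⟩, ht3⟩
        by_contra hne
        have := ht3 (by omega)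
        omega
      · intro ht; subst ht
        exact ⟨⟨hlohi, le_rfl⟩, fun h => by omega⟩

lemma env_rep : ∀ k : ℕ, k ≤ l → ∀ m ∈ env C k,
    ∃ j : ℕ, 1 ≤ j ∧ j ≤ k ∧ m ∈ env C j \ env C (j-1) := by
  intro k
  induction k with
  | zero => intro _ m hm; simp [env] at hm
  | succ p ih =>
    intro hpl m hm
    by_cases hmem : m ∈ env C p
    · obtain ⟨j, h1, h2, h3⟩ := ih (by omega) m hmem
      exact ⟨j, h1, by omega, h3⟩
    · exact ⟨p+1, by omega, le_rfl, ⟨hm, hmem⟩⟩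

end ChainLemmas
section FourLemmas

variable {i : ℤ → I} {l : ℕ} (C : AdmissibleChain i l)

/-- Lemma C: if `[x,y'] ∈ boxesOf C` with `y' < y`, the new point of `[x,y]` is `y`. -/
lemma diff_right_of_shorter {k : ℕ} {x y y' : ℤ}
    (h1 : 1 ≤ k) (h2 : k ≤ l) (hbk : C.box k = (x, y))
    (hmem : (x, y') ∈ boxesOf C) (hy' : y' < y) :
    env C k \ env C (k-1) = {y} := by
  obtain ⟨z, hdiff, hznot, hz1, hz2, hzend, hzcase⟩ := exists_new C h1 h2
  have hx : (C.box k).1 = x := by rw [hbk]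
  have hy : (C.box k).2 = y := by rw [hbk]
  have hbb := box_bounds C h1 h2
  suffices hz : z = y by rw [hdiff, hz]
  by_contra hzy
  have hzx : z = x := by rcases hzend with h | h <;> omega
  obtain ⟨k', hk'1, hk'2, hbk'⟩ := hmem
  have hx' : (C.box k').1 = x := by rw [hbk']
  have hy'' : (C.box k').2 = y' := by rw [hbk']
  have hbb' := box_bounds C hk'1 hk'2
  have hxy : x < y := by omega
  rcases hzcase with ⟨hk1e, hzl, hzh⟩ | ⟨hk2e, hzl, hll, hhh⟩ | ⟨hk2e, hzh, hhh, hll⟩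
  · omega
  · -- grew left at k, z = lo k = x
    obtain ⟨z', hdiff', hznot', hz1', hz2', hzend', hzcase'⟩ := exists_new C hk'1 hk'2
    have hzmem : z ∈ env C k := by
      have : z ∈ env C k \ env C (k-1) := by rw [hdiff]; rfl
      exact this.1
    have hzmem' : z' ∈ env C k' := by
      have : z' ∈ env C k' \ env C (k'-1) := by rw [hdiff']; rfl
      exact this.1
    have hkk' : k ≠ k' := by
      rintro rfl
      rw [hbk] at hbk'
      simp only [Prod.mk.injEq] at hbk'
      omega
    have hzz' : z' ≠ z := by
      intro he
      rcases Nat.lt_or_ge k' k with h | h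
      · exact hznot (env_mono C (by omega) (by omega) (he ▸ hzmem'))
      · exact hznot' (he.symm ▸ env_mono C (by omega) (by omega) hzmem)
    have hz'y' : z' = y' := by rcases hzend' with h | h <;> omega
    rcases hzcase' with ⟨hk1e', hzl', hzh'⟩ | ⟨hk2e', hzl', _, _⟩ | ⟨hk2e', hzh', hhh', hll'⟩
    · omega
    · omega
    · rcases Nat.lt_or_ge k' k with h | h
      · apply hznot
        have hxin : x ∈ env C k' := by
          rw [env_eq C (by omega)]
          exact Set.mem_Icc.2 ⟨by omega, by omega⟩
        exact hzx ▸ env_mono C (by omega) (by omega) hxin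
      · have hyin : y ∈ env C k := by
          rw [env_eq C (by omega)]
          exact Set.mem_Icc.2 ⟨by omega, by omega⟩
        have hyin' : y ∈ env C (k'-1) := env_mono C (by omega) (by omega) hyin
        rw [env_eq C (by omega)] at hyin'
        have := Set.mem_Icc.1 hyin'
        omega
  · omega

/-- Lemma D: if `[x',y] ∈ boxesOf C` with `x < x'`, the new point of `[x,y]` is `x`. -/
lemma diff_left_of_larger {k : ℕ} {x y x' : ℤ}
    (h1 : 1 ≤ k) (h2 : k ≤ l) (hbk : C.box k = (x, y))
    (hmem : (x', y) ∈ boxesOf C) (hx' : x < x') :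
    env C k \ env C (k-1) = {x} := by
  obtain ⟨z, hdiff, hznot, hz1, hz2, hzend, hzcase⟩ := exists_new C h1 h2
  have hx : (C.box k).1 = x := by rw [hbk]
  have hy : (C.box k).2 = y := by rw [hbk]
  have hbb := box_bounds C h1 h2
  suffices hz : z = x by rw [hdiff, hz]
  by_contra hzx
  have hzy : z = y := by rcases hzend with h | h <;> omega
  obtain ⟨k', hk'1, hk'2, hbk'⟩ := hmem
  have hx'' : (C.box k').1 = x' := by rw [hbk']
  have hy'' : (C.box k').2 = y := by rw [hbk']
  have hbb' := box_bounds C hk'1 hk'2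
  have hxy : x < y := by omega
  rcases hzcase with ⟨hk1e, hzl, hzh⟩ | ⟨hk2e, hzl, hll, hhh⟩ | ⟨hk2e, hzh, hhh, hll⟩
  · omega
  · omega
  · -- grew right at k, z = hi k = y
    obtain ⟨z', hdiff', hznot', hz1', hz2', hzend', hzcase'⟩ := exists_new C hk'1 hk'2
    have hzmem : z ∈ env C k := by
      have : z ∈ env C k \ env C (k-1) := by rw [hdiff]; rfl
      exact this.1
    have hzmem' : z' ∈ env C k' := by
      have : z' ∈ env C k' \ env C (k'-1) := by rw [hdiff']; rfl
      exact this.1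
    have hkk' : k ≠ k' := by
      rintro rfl
      rw [hbk] at hbk'
      simp only [Prod.mk.injEq] at hbk'
      omega
    have hzz' : z' ≠ z := by
      intro he
      rcases Nat.lt_or_ge k' k with h | h
      · exact hznot (env_mono C (by omega) (by omega) (he ▸ hzmem'))
      · exact hznot' (he.symm ▸ env_mono C (by omega) (by omega) hzmem)
    have hz'x' : z' = x' := by rcases hzend' with h | h <;> omega
    rcases hzcase' with ⟨hk1e', hzl', hzh'⟩ | ⟨hk2e', hzl', hll', hhh'⟩ | ⟨hk2e', hzh', _, _⟩
    · omega
    · rcases Nat.lt_or_ge k' k with h | h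
      · apply hznot
        have hyin : y ∈ env C k' := by
          rw [env_eq C (by omega)]
          exact Set.mem_Icc.2 ⟨by omega, by omega⟩
        exact hzy ▸ env_mono C (by omega) (by omega) hyin
      · have hxin : x ∈ env C k := by
          rw [env_eq C (by omega)]
          exact Set.mem_Icc.2 ⟨by omega, by omega⟩
        have hxin' : x ∈ env C (k'-1) := env_mono C (by omega) (by omega) hxin
        rw [env_eq C (by omega)] at hxin'
        have := Set.mem_Icc.1 hxin'
        omega
    · omega

/-- Lemma B: if the new point of `[x,y]` is `y` and `x < y`, there is `[x,y'] ∈ boxesOf C`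
with `y' < y`. -/
lemma shorter_of_diff_right {k : ℕ} {x y : ℤ}
    (h1 : 1 ≤ k) (h2 : k ≤ l) (hbk : C.box k = (x, y)) (hxy : x < y)
    (hdy : env C k \ env C (k-1) = {y}) :
    ∃ y', (x, y') ∈ boxesOf C ∧ y' < y := by
  obtain ⟨z, hdiff, hznot, hz1, hz2, hzend, hzcase⟩ := exists_new C h1 h2
  have hx : (C.box k).1 = x := by rw [hbk]
  have hy : (C.box k).2 = y := by rw [hbk]
  have hbb := box_bounds C h1 h2
  have hzy : z = y := by
    have := hdiff.symm.trans hdy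
    exact Set.singleton_eq_singleton_iff.1 this
  rcases hzcase with ⟨hk1e, hzl, hzh⟩ | ⟨hk2e, hzl, hll, hhh⟩ | ⟨hk2e, hzh, hhh, hll⟩
  · omega
  · omega
  · -- grew right at k, y = hi k
    have hxin : x ∈ env C (k-1) := by
      rw [env_eq C (by omega)]
      exact Set.mem_Icc.2 ⟨by omega, by omega⟩
    obtain ⟨j, hj1, hj2, hjmem⟩ := env_rep C (k-1) (by omega) x hxin
    obtain ⟨zj, hdiffj, _, hzj1, hzj2, hzendj, _⟩ := exists_new C hj1 (by omega)
    have hxzj : x = zj := by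
      rw [hdiffj] at hjmem
      exact hjmem
    have hbbj := box_bounds C hj1 (k := j) (by omega)
    have hmono := mono_lo_hi C hj1 (show j ≤ k - 1 by omega) (by omega)
    rcases hzendj with hcase | hcase
    · -- x = (box j).1, take y' = (box j).2
      refine ⟨(C.box j).2, ⟨j, hj1, by omega, ?_⟩, by omega⟩
      have : (C.box j).1 = x := by omega
      rw [← this]
    · -- x = (box j).2 : show box j = (x,x)
      have hcolj : i ((C.box j).1) = i x := by
        rcases C.box_spec j hj1 (by omega) with ⟨e1, _, _, hc, _⟩ | ⟨e2, _, _, hc, _⟩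
        · rw [e1, ← hc]; congr 1; omega
        · rw [hc, ← e2]; congr 1; omega
      have huj : (C.box j).1 = x := by
        rcases C.box_spec k h1 h2 with ⟨e1, _, _, _, _⟩ | ⟨e2, _, _, hck, hgap⟩
        · omega
        · by_contra hne
          have hult : (C.box j).1 < x := by omega
          exact hgap ((C.box j).1) (by omega) (by omega) (by rw [hcolj, hx, hy] at *; rw [← e2] at hck ⊢; exact hck ▸ hcolj)
      refine ⟨x, ⟨j, hj1, by omega, ?_⟩, hxy⟩
      have : C.box j = ((C.box j).1, (C.box j).2) := rfl
      rw [this, huj]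
      congr 1
      omega

/-- Lemma A: if the new point of `[x,y]` is `x` and `x < y`, there is `[x',y] ∈ boxesOf C`
with `x < x'`. -/
lemma larger_of_diff_left {k : ℕ} {x y : ℤ}
    (h1 : 1 ≤ k) (h2 : k ≤ l) (hbk : C.box k = (x, y)) (hxy : x < y)
    (hdx : env C k \ env C (k-1) = {x}) :
    ∃ x', (x', y) ∈ boxesOf C ∧ x < x' := by
  obtain ⟨z, hdiff, hznot, hz1, hz2, hzend, hzcase⟩ := exists_new C h1 h2
  have hx : (C.box k).1 = x := by rw [hbk]
  have hy : (C.box k).2 = y := by rw [hbk]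
  have hbb := box_bounds C h1 h2
  have hzx : z = x := by
    have := hdiff.symm.trans hdx
    exact Set.singleton_eq_singleton_iff.1 this
  rcases hzcase with ⟨hk1e, hzl, hzh⟩ | ⟨hk2e, hzl, hll, hhh⟩ | ⟨hk2e, hzh, hhh, hll⟩
  · omega
  · -- grew left at k, x = lo k
    have hyin : y ∈ env C (k-1) := by
      rw [env_eq C (by omega)]
      exact Set.mem_Icc.2 ⟨by omega, by omega⟩
    obtain ⟨j, hj1, hj2, hjmem⟩ := env_rep C (k-1) (by omega) y hyin
    obtain ⟨zj, hdiffj, _, hzj1, hzj2, hzendj, _⟩ := exists_new C hj1 (by omega)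
    have hyzj : y = zj := by
      rw [hdiffj] at hjmem
      exact hjmem
    have hbbj := box_bounds C hj1 (k := j) (by omega)
    have hmono := mono_lo_hi C hj1 (show j ≤ k - 1 by omega) (by omega)
    rcases hzendj with hcase | hcase
    · -- y = (box j).1 : show box j = (y,y)
      have hcolj : i ((C.box j).2) = i y := by
        rcases C.box_spec j hj1 (by omega) with ⟨e1, _, _, hc, _⟩ | ⟨e2, _, _, hc, _⟩
        · rw [hc, ← e1]; congr 1; omega
        · rw [e2, ← hc]; congr 1; omega
      have hwj : (C.box j).2 = y := by
        rcases C.box_spec k h1 h2 with ⟨e1, _, _, hck, hgap⟩ | ⟨e2, _, _, _, _⟩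
        · by_contra hne
          have hwgt : y < (C.box j).2 := by omega
          have hck' : i y = i (C.lo k) := by rw [← hy]; exact hck
          exact hgap ((C.box j).2) (by omega) (by omega) (hcolj.trans hck')
        · omega
      refine ⟨y, ⟨j, hj1, by omega, ?_⟩, hxy⟩
      have : C.box j = ((C.box j).1, (C.box j).2) := rfl
      rw [this, hwj]
      congr 1
      omega
    · -- y = (box j).2, take x' = (box j).1
      refine ⟨(C.box j).1, ⟨j, hj1, by omega, ?_⟩, by omega⟩
      have : (C.box j).2 = y := by omega
      rw [← this]
  · omega

end FourLemmas
section Existence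

variable {i : ℤ → I}

lemma boxCommute_refl (i : ℤ → I) (x y : ℤ) : BoxCommute i x y x y := by
  left
  constructor
  · intro t h1 h2; exact absurd h2 (by omega)
  · intro t h1 h2; exact absurd h2 (by omega)

lemma mem_of_commutes_all {a b : ℤ} {F : Set (ℤ × ℤ)} (hF : MaxCommFamily i a b F)
    {p : ℤ × ℤ} (hbox : IsBox i p.1 p.2) (hr1 : a ≤ p.1) (hr2 : p.2 ≤ b)
    (hcomm : ∀ q ∈ F, BoxCommute i p.1 p.2 q.1 q.2) : p ∈ F := by
  have hcomm2 : CommFamily i (insert p F) := by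
    constructor
    · intro q hq
      rcases Set.mem_insert_iff.1 hq with hq | hq
      · rw [hq]; exact hbox
      · exact hF.1.1 q hq
    · intro q hq q' hq'
      rcases Set.mem_insert_iff.1 hq with hq | hq <;>
        rcases Set.mem_insert_iff.1 hq' with hq' | hq'
      · rw [hq, hq']; exact boxCommute_refl i p.1 p.2
      · rw [hq]; exact hcomm q' hq'
      · rw [hq']; exact Or.symm (hcomm q hq)
      · exact hF.1.2 q hq q' hq'
  have hrange2 : InRange a b (insert p F) := by
    intro q hq
    rcases Set.mem_insert_iff.1 hq with hq | hq
    · rw [hq]; exact ⟨hr1, hr2⟩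
    · exact hF.2.1 q hq
  have heq := hF.2.2 _ hcomm2 hrange2 (Set.subset_insert p F)
  rw [heq]; exact Set.mem_insert p F

lemma exists_chain : ∀ n : ℕ, ∀ a b : ℤ, b = a + n → ∀ F : Set (ℤ × ℤ),
    MaxCommFamily i a b F →
    ∃ (lc : ℕ) (C : AdmissibleChain i lc),
      1 ≤ lc ∧ C.lo lc = a ∧ C.hi lc = b ∧ boxesOf C = F := by
  intro n
  induction n with
  | zero =>
    intro a b hb F hF
    have hba : b = a := by push_cast at hb; omega
    subst hba
    have hsub : F ⊆ {(b, b)} := by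
      intro p hp
      have h1 := hF.2.1 p hp
      have h2 := (hF.1.1 p hp).1
      have hp1 : p.1 = b := by omega
      have hp2 : p.2 = b := by omega
      simp only [Set.mem_singleton_iff]
      exact Prod.ext hp1 hp2
    have hcomm : CommFamily i {(b, b)} := by
      constructor
      · intro p hp
        simp only [Set.mem_singleton_iff] at hp
        rw [hp]; exact ⟨le_rfl, rfl⟩
      · intro p hp q hq
        simp only [Set.mem_singleton_iff] at hp hq
        rw [hp, hq]; exact boxCommute_refl i b b
    have hrange : InRange b b {(b, b)} := by
      intro p hp
      simp only [Set.mem_singleton_iff] at hp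
      rw [hp]; exact ⟨le_rfl, le_rfl⟩
    have hFeq : F = {(b, b)} := hF.2.2 _ hcomm hrange hsub
    refine ⟨1, ⟨fun _ => b, fun _ => b, fun _ => (b, b), ?_, ?_, ?_, ?_⟩, le_rfl, rfl, rfl, ?_⟩
    · intro k h1 h2
      have : k = 1 := by omega
      subst this; push_cast; ring
    · intro k h1 h2; omega
    · intro k h1 h2
      left
      exact ⟨rfl, le_rfl, le_rfl, rfl, fun t ht1 ht2 => absurd (ht1.trans_le ht2) (lt_irrefl _)⟩
    · intro k h1 h2
      have : k = 1 := by omega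
      subst this
      ext t
      simp
    · rw [hFeq]
      ext p
      simp only [boxesOf, Set.mem_setOf_eq, Set.mem_singleton_iff]
      constructor
      · rintro ⟨k, _, _, h⟩; exact h.symm
      · intro h; exact ⟨1, le_rfl, le_rfl, h.symm⟩
  | succ n IH =>
    intro a b hb F hF
    classical
    have hab : a + 1 ≤ b := by push_cast at hb; omega
    -- the L-box and R-box of [a,b]
    set SL : Finset ℤ := (Finset.Icc a b).filter (fun t => i t = i a) with hSL
    have haSL : a ∈ SL := by
      simp only [hSL, Finset.mem_filter, Finset.mem_Icc]
      exact ⟨⟨le_rfl, by omega⟩, by trivial⟩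
    set yL : ℤ := SL.max' ⟨a, haSL⟩ with hyL
    have hyLmem := SL.max'_mem ⟨a, haSL⟩
    rw [← hyL] at hyLmem
    simp only [hSL, Finset.mem_filter, Finset.mem_Icc] at hyLmem
    obtain ⟨⟨hyL1, hyL2⟩, hyLcol⟩ := hyLmem
    have hyLmax : ∀ t : ℤ, a ≤ t → t ≤ b → i t = i a → t ≤ yL := by
      intro t h1 h2 h3
      apply SL.le_max' t
      simp only [hSL, Finset.mem_filter, Finset.mem_Icc]
      exact ⟨⟨h1, h2⟩, h3⟩
    set SR : Finset ℤ := (Finset.Icc a b).filter (fun t => i t = i b) with hSR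
    have hbSR : b ∈ SR := by
      simp only [hSR, Finset.mem_filter, Finset.mem_Icc]
      exact ⟨⟨by omega, le_rfl⟩, by trivial⟩
    set xR : ℤ := SR.min' ⟨b, hbSR⟩ with hxR
    have hxRmem := SR.min'_mem ⟨b, hbSR⟩
    rw [← hxR] at hxRmem
    simp only [hSR, Finset.mem_filter, Finset.mem_Icc] at hxRmem
    obtain ⟨⟨hxR1, hxR2⟩, hxRcol⟩ := hxRmem
    have hxRmin : ∀ t : ℤ, a ≤ t → t ≤ b → i t = i b → xR ≤ t := by
      intro t h1 h2 h3
      apply SR.min'_le t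
      simp only [hSR, Finset.mem_filter, Finset.mem_Icc]
      exact ⟨⟨h1, h2⟩, h3⟩
    have hpLcomm : ∀ u v : ℤ, a ≤ u → v ≤ b → BoxCommute i a yL u v := by
      intro u v hu hv
      left
      constructor
      · intro t ht1 ht2; exact absurd (by omega : a ≤ t) (by omega)
      · intro t ht1 ht2 hc
        have : i t = i a := by rw [hc, hyLcol]
        have := hyLmax t (by omega) (by omega) this
        omega
    have hpRcomm : ∀ u v : ℤ, a ≤ u → v ≤ b → BoxCommute i xR b u v := by
      intro u v hu hv
      left
      constructor
      · intro t ht1 ht2 hc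
        have : i t = i b := by rw [hc, hxRcol]
        have := hxRmin t (by omega) (by omega) this
        omega
      · intro t ht1 ht2; exact absurd (by omega : t ≤ b) (by omega)
    have hpL : (a, yL) ∈ F :=
      mem_of_commutes_all hF ⟨hyL1, hyLcol.symm⟩ le_rfl hyL2
        (fun q hq => hpLcomm q.1 q.2 (hF.2.1 q hq).1 (hF.2.1 q hq).2)
    have hpR : (xR, b) ∈ F :=
      mem_of_commutes_all hF ⟨hxR2, hxRcol⟩ hxR1 le_rfl
        (fun q hq => hpRcomm q.1 q.2 (hF.2.1 q hq).1 (hF.2.1 q hq).2)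
    -- dichotomy
    have hdich : (∀ q ∈ F, q ≠ (a, yL) → q.1 ≠ a) ∨ (∀ q ∈ F, q ≠ (xR, b) → q.2 ≠ b) := by
      by_contra hcon
      push_neg at hcon
      obtain ⟨⟨q1, hq1F, hq1ne, hq1a⟩, ⟨q2, hq2F, hq2ne, hq2b⟩⟩ := hcon
      have hq1box := hF.1.1 q1 hq1F
      have hq2box := hF.1.1 q2 hq2F
      have hq1r := hF.2.1 q1 hq1F
      have hq2r := hF.2.1 q2 hq2F
      have hq1le : q1.1 ≤ q1.2 := hq1box.1
      have hq2le : q2.1 ≤ q2.2 := hq2box.1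
      have hq1r1 : a ≤ q1.1 := hq1r.1
      have hq1r2 : q1.2 ≤ b := hq1r.2
      have hq2r1 : a ≤ q2.1 := hq2r.1
      have hq2r2 : q2.2 ≤ b := hq2r.2
      have hvcol : i q1.2 = i a := by rw [← hq1a]; exact hq1box.2.symm
      have hvle : q1.2 ≤ yL := hyLmax q1.2 (by omega) (by omega) hvcol
      have hvne : q1.2 ≠ yL := by
        intro h
        exact hq1ne (Prod.ext hq1a h)
      have hucol : i q2.1 = i b := by rw [← hq2b]; exact hq2box.2
      have huge : xR ≤ q2.1 := hxRmin q2.1 (by omega) (by omega) hucol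
      have hune : q2.1 ≠ xR := by
        intro h
        exact hq2ne (Prod.ext h hq2b)
      rcases hF.1.2 q1 hq1F q2 hq2F with ⟨_, hga⟩ | ⟨hgb, _⟩
      · exact hga yL (by omega) (by omega) (by rw [hyLcol, ← hvcol])
      · exact hgb xR (by omega) (by omega) (by rw [hxRcol, ← hucol])
    rcases hdich with hL | hR
    · -- peel left : previous interval [a+1, b]
      have hF' : MaxCommFamily i (a+1) b (F \ {(a, yL)}) := by
        refine ⟨⟨fun p hp => hF.1.1 p hp.1, fun p hp q hq => hF.1.2 p hp.1 q hq.1⟩, ?_, ?_⟩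
        · intro p hp
          have h1 := hF.2.1 p hp.1
          have h2 : p.1 ≠ a := hL p hp.1 (by simpa using hp.2)
          exact ⟨by omega, h1.2⟩
        · intro G hGc hGr hFG
          refine (Set.Subset.antisymm hFG ?_)
          intro q hq
          have hqF : q ∈ F := by
            apply mem_of_commutes_all hF (hGc.1 q hq) (by have := (hGr q hq).1; omega)
              (hGr q hq).2
            intro p hp
            by_cases hppl : p = (a, yL)
            · subst hppl
              exact Or.symm (hpLcomm q.1 q.2 (by have := (hGr q hq).1; omega) (hGr q hq).2)
            · exact hGc.2 q hq p (hFG ⟨hp, by simpa using hppl⟩)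
          refine ⟨hqF, ?_⟩
          simp only [Set.mem_singleton_iff]
          intro hqeq
          have h1 := (hGr q hq).1
          rw [hqeq] at h1
          simp at h1
      obtain ⟨l', C', hl1', hlo', hhi', hbox'⟩ :=
        IH (a+1) b (by push_cast at hb ⊢; omega) _ hF'
      have hli : (l' : ℤ) = n + 1 := by
        have := C'.size l' hl1' le_rfl
        rw [hlo', hhi'] at this
        push_cast at hb
        omega
      refine ⟨l' + 1, ⟨fun k => if k = l' + 1 then a else C'.lo k,
                       fun k => if k = l' + 1 then b else C'.hi k,
                       fun k => if k = l' + 1 then (a, yL) else C'.box k,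
                       ?_, ?_, ?_, ?_⟩, by omega,
                       by show (if l' + 1 = l' + 1 then a else C'.lo (l' + 1)) = a
                          exact if_pos rfl,
                       by show (if l' + 1 = l' + 1 then b else C'.hi (l' + 1)) = b
                          exact if_pos rfl, ?_⟩
      · intro k h1 h2
        beta_reduce
        by_cases hk : k = l' + 1
        · subst hk
          rw [if_pos rfl, if_pos rfl]
          push_cast at hb ⊢
          omega
        · rw [if_neg hk, if_neg hk]
          exact C'.size k h1 (by omega)
      · intro k h1 h2
        beta_reduce
        by_cases hk : k = l'
        · left
          rw [if_pos (by omega : k + 1 = l' + 1), if_pos (by omega : k + 1 = l' + 1),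
            if_neg (by omega : ¬ k = l' + 1), if_neg (by omega : ¬ k = l' + 1)]
          rw [hk]
          omega
        · have hs := C'.step k h1 (by omega)
          rw [if_neg (by omega : ¬ k + 1 = l' + 1), if_neg (by omega : ¬ k + 1 = l' + 1),
            if_neg (by omega : ¬ k = l' + 1), if_neg (by omega : ¬ k = l' + 1)]
          exact hs
      · intro k h1 h2
        beta_reduce
        by_cases hk : k = l' + 1
        · subst hk
          rw [if_pos rfl, if_pos rfl, if_pos rfl]
          left
          refine ⟨rfl, hyL1, hyL2, hyLcol, ?_⟩
          intro t ht1 ht2 hc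
          have ht1' : yL < t := ht1
          have := hyLmax t (by omega) ht2 hc
          omega
        · rw [if_neg hk, if_neg hk, if_neg hk]
          exact C'.box_spec k h1 (by omega)
      · intro k h1 h2
        beta_reduce
        by_cases hk : k = l' + 1
        · subst hk
          rw [if_pos rfl, if_pos rfl]
          ext t
          simp only [Set.mem_Icc, Set.mem_iUnion, exists_prop]
          constructor
          · rintro ⟨ht1, ht2⟩
            by_cases hta : a + 1 ≤ t
            · have htm : t ∈ Set.Icc (C'.lo l') (C'.hi l') := by
                rw [hlo', hhi']; exact Set.mem_Icc.2 ⟨hta, ht2⟩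
              rw [C'.cover l' hl1' le_rfl] at htm
              simp only [Set.mem_iUnion, Set.mem_Icc, exists_prop] at htm
              obtain ⟨j, ⟨hj1, hj2⟩, hj3⟩ := htm
              refine ⟨j, ⟨hj1, by omega⟩, ?_⟩
              simp only [if_neg (by omega : ¬ j = l' + 1)]
              exact hj3
            · refine ⟨l' + 1, ⟨by omega, le_rfl⟩, ?_⟩
              rw [if_pos rfl]
              exact show a ≤ t ∧ t ≤ yL from ⟨by omega, by omega⟩
          · rintro ⟨j, ⟨hj1, hj2⟩, hj3⟩
            by_cases hj : j = l' + 1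
            · rw [if_pos hj] at hj3
              have hj4 : a ≤ t ∧ t ≤ yL := hj3
              exact ⟨hj4.1, le_trans hj4.2 hyL2⟩
            · rw [if_neg hj] at hj3
              have hbbj := box_bounds C' hj1 (by omega)
              have hmono := mono_lo_hi C' hj1 (by omega : j ≤ l') le_rfl
              rw [hlo'] at hmono
              rw [hhi'] at hmono
              constructor <;> omega
        · rw [if_neg hk, if_neg hk]
          rw [C'.cover k h1 (by omega)]
          ext t
          simp only [Set.mem_iUnion, Set.mem_Icc, exists_prop]
          constructor
          · rintro ⟨j, ⟨hj1, hj2⟩, hj3⟩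
            refine ⟨j, ⟨hj1, hj2⟩, ?_⟩
            simp only [if_neg (by omega : ¬ j = l' + 1)]
            exact hj3
          · rintro ⟨j, ⟨hj1, hj2⟩, hj3⟩
            rw [if_neg (by omega : ¬ j = l' + 1)] at hj3
            exact ⟨j, ⟨hj1, hj2⟩, hj3⟩
      · ext p
        simp only [boxesOf, Set.mem_setOf_eq]
        constructor
        · rintro ⟨k, hk1, hk2, hbk⟩
          by_cases hk : k = l' + 1
          · subst hk
            rw [if_pos rfl] at hbk
            rw [← hbk]; exact hpL
          · rw [if_neg hk] at hbk
            have hmem : p ∈ boxesOf C' := ⟨k, hk1, by omega, hbk⟩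
            rw [hbox'] at hmem
            exact hmem.1
        · intro hp
          by_cases hp' : p = (a, yL)
          · exact ⟨l' + 1, by omega, le_rfl, by rw [if_pos rfl, hp']⟩
          · have hmem : p ∈ boxesOf C' := by
              rw [hbox']; exact ⟨hp, by simpa using hp'⟩
            obtain ⟨k, hk1, hk2, hbk⟩ := hmem
            exact ⟨k, hk1, by omega, by rw [if_neg (by omega)]; exact hbk⟩
    · -- peel right : previous interval [a, b-1]
      have hF' : MaxCommFamily i a (b-1) (F \ {(xR, b)}) := by
        refine ⟨⟨fun p hp => hF.1.1 p hp.1, fun p hp q hq => hF.1.2 p hp.1 q hq.1⟩, ?_, ?_⟩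
        · intro p hp
          have h1 := hF.2.1 p hp.1
          have h2 : p.2 ≠ b := hR p hp.1 (by simpa using hp.2)
          exact ⟨h1.1, by omega⟩
        · intro G hGc hGr hFG
          refine (Set.Subset.antisymm hFG ?_)
          intro q hq
          have hqF : q ∈ F := by
            apply mem_of_commutes_all hF (hGc.1 q hq) (hGr q hq).1
              (by have := (hGr q hq).2; omega)
            intro p hp
            by_cases hppl : p = (xR, b)
            · subst hppl
              exact Or.symm (hpRcomm q.1 q.2 (hGr q hq).1 (by have := (hGr q hq).2; omega))
            · exact hGc.2 q hq p (hFG ⟨hp, by simpa using hppl⟩)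
          refine ⟨hqF, ?_⟩
          simp only [Set.mem_singleton_iff]
          intro hqeq
          have h1 := (hGr q hq).2
          rw [hqeq] at h1
          simp at h1
      obtain ⟨l', C', hl1', hlo', hhi', hbox'⟩ :=
        IH a (b-1) (by push_cast at hb ⊢; omega) _ hF'
      have hli : (l' : ℤ) = n + 1 := by
        have := C'.size l' hl1' le_rfl
        rw [hlo', hhi'] at this
        push_cast at hb
        omega
      refine ⟨l' + 1, ⟨fun k => if k = l' + 1 then a else C'.lo k,
                       fun k => if k = l' + 1 then b else C'.hi k,
                       fun k => if k = l' + 1 then (xR, b) else C'.box k,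
                       ?_, ?_, ?_, ?_⟩, by omega,
                       by show (if l' + 1 = l' + 1 then a else C'.lo (l' + 1)) = a
                          exact if_pos rfl,
                       by show (if l' + 1 = l' + 1 then b else C'.hi (l' + 1)) = b
                          exact if_pos rfl, ?_⟩
      · intro k h1 h2
        beta_reduce
        by_cases hk : k = l' + 1
        · subst hk
          rw [if_pos rfl, if_pos rfl]
          push_cast at hb ⊢
          omega
        · rw [if_neg hk, if_neg hk]
          exact C'.size k h1 (by omega)
      · intro k h1 h2
        beta_reduce
        by_cases hk : k = l'
        · right
          rw [if_pos (by omega : k + 1 = l' + 1), if_pos (by omega : k + 1 = l' + 1),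
            if_neg (by omega : ¬ k = l' + 1), if_neg (by omega : ¬ k = l' + 1)]
          rw [hk]
          omega
        · have hs := C'.step k h1 (by omega)
          rw [if_neg (by omega : ¬ k + 1 = l' + 1), if_neg (by omega : ¬ k + 1 = l' + 1),
            if_neg (by omega : ¬ k = l' + 1), if_neg (by omega : ¬ k = l' + 1)]
          exact hs
      · intro k h1 h2
        beta_reduce
        by_cases hk : k = l' + 1
        · subst hk
          rw [if_pos rfl, if_pos rfl, if_pos rfl]
          right
          refine ⟨rfl, hxR1, hxR2, hxRcol, ?_⟩
          intro t ht1 ht2 hc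
          have ht2' : t < xR := ht2
          have := hxRmin t ht1 (by omega) hc
          omega
        · rw [if_neg hk, if_neg hk, if_neg hk]
          exact C'.box_spec k h1 (by omega)
      · intro k h1 h2
        beta_reduce
        by_cases hk : k = l' + 1
        · subst hk
          rw [if_pos rfl, if_pos rfl]
          ext t
          simp only [Set.mem_Icc, Set.mem_iUnion, exists_prop]
          constructor
          · rintro ⟨ht1, ht2⟩
            by_cases htb : t ≤ b - 1
            · have htm : t ∈ Set.Icc (C'.lo l') (C'.hi l') := by
                rw [hlo', hhi']; exact Set.mem_Icc.2 ⟨ht1, htb⟩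
              rw [C'.cover l' hl1' le_rfl] at htm
              simp only [Set.mem_iUnion, Set.mem_Icc, exists_prop] at htm
              obtain ⟨j, ⟨hj1, hj2⟩, hj3⟩ := htm
              refine ⟨j, ⟨hj1, by omega⟩, ?_⟩
              simp only [if_neg (by omega : ¬ j = l' + 1)]
              exact hj3
            · refine ⟨l' + 1, ⟨by omega, le_rfl⟩, ?_⟩
              rw [if_pos rfl]
              exact show xR ≤ t ∧ t ≤ b from ⟨by omega, by omega⟩
          · rintro ⟨j, ⟨hj1, hj2⟩, hj3⟩
            by_cases hj : j = l' + 1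
            · rw [if_pos hj] at hj3
              have hj4 : xR ≤ t ∧ t ≤ b := hj3
              exact ⟨le_trans hxR1 hj4.1, hj4.2⟩
            · rw [if_neg hj] at hj3
              have hbbj := box_bounds C' hj1 (by omega)
              have hmono := mono_lo_hi C' hj1 (by omega : j ≤ l') le_rfl
              rw [hlo'] at hmono
              rw [hhi'] at hmono
              constructor <;> omega
        · rw [if_neg hk, if_neg hk]
          rw [C'.cover k h1 (by omega)]
          ext t
          simp only [Set.mem_iUnion, Set.mem_Icc, exists_prop]
          constructor
          · rintro ⟨j, ⟨hj1, hj2⟩, hj3⟩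
            refine ⟨j, ⟨hj1, hj2⟩, ?_⟩
            simp only [if_neg (by omega : ¬ j = l' + 1)]
            exact hj3
          · rintro ⟨j, ⟨hj1, hj2⟩, hj3⟩
            rw [if_neg (by omega : ¬ j = l' + 1)] at hj3
            exact ⟨j, ⟨hj1, hj2⟩, hj3⟩
      · ext p
        simp only [boxesOf, Set.mem_setOf_eq]
        constructor
        · rintro ⟨k, hk1, hk2, hbk⟩
          by_cases hk : k = l' + 1
          · subst hk
            rw [if_pos rfl] at hbk
            rw [← hbk]; exact hpR
          · rw [if_neg hk] at hbk
            have hmem : p ∈ boxesOf C' := ⟨k, hk1, by omega, hbk⟩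
            rw [hbox'] at hmem
            exact hmem.1
        · intro hp
          by_cases hp' : p = (xR, b)
          · exact ⟨l' + 1, by omega, le_rfl, by rw [if_pos rfl, hp']⟩
          · have hmem : p ∈ boxesOf C' := by
              rw [hbox']; exact ⟨hp, by simpa using hp'⟩
            obtain ⟨k, hk1, hk2, hbk⟩ := hmem
            exact ⟨k, hk1, by omega, by rw [if_neg (by omega)]; exact hbk⟩

end Existence
/-- Characterization of `y` being the effective end of `[x,y] ∈ F`. -/
theorem effectiveEnd_right_iff (i : ℤ → I) (a b : ℤ) (hab : a ≤ b)
    (F : Set (ℤ × ℤ)) (hF : MaxCommFamily i a b F) (x y : ℤ) (hxy : (x, y) ∈ F) :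
    (IsEffectiveEnd i a b F x y y ↔ (x = y ∨ ∃ y', (x, y') ∈ F ∧ y' < y)) ∧
    (IsEffectiveEnd i a b F x y y ↔ ¬ ∃ x', (x', y) ∈ F ∧ x < x') := by
  have hb : b = a + ((b - a).toNat : ℤ) := by omega
  obtain ⟨lc, C, hl1, hlo, hhi, hbox⟩ := exists_chain (b - a).toNat a b hb F hF
  have hxyC : (x, y) ∈ boxesOf C := by rw [hbox]; exact hxy
  obtain ⟨k, hk1, hk2, hbk⟩ := hxyC
  have hxley : x ≤ y := (hF.1.1 _ hxy).1
  have hBA : (x = y ∨ ∃ y', (x, y') ∈ F ∧ y' < y) → IsEffectiveEnd i a b F x y y := by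
    intro hB
    refine ⟨by simp, ?_⟩
    intro l' C' _ _ hbox' k' hk1' hk2' hbk'
    rcases hB with hxy' | ⟨y', hy'F, hy'lt⟩
    · subst hxy'
      obtain ⟨z, hdiff, _, hz1, hz2, _, _⟩ := exists_new C' hk1' hk2'
      have hx1 : (C'.box k').1 = x := by rw [hbk']
      have hx2 : (C'.box k').2 = x := by rw [hbk']
      have hzx : z = x := by omega
      rw [hdiff, hzx]
    · have hmem : (x, y') ∈ boxesOf C' := by rw [hbox']; exact hy'F
      exact (diff_right_of_shorter C' hk1' hk2' hbk' hmem hy'lt).symm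
  have hCA : (¬ ∃ x', (x', y) ∈ F ∧ x < x') → IsEffectiveEnd i a b F x y y := by
    intro hC
    refine ⟨by simp, ?_⟩
    intro l' C' _ _ hbox' k' hk1' hk2' hbk'
    obtain ⟨z, hdiff, _, hz1, hz2, hzend, _⟩ := exists_new C' hk1' hk2'
    have hx1 : (C'.box k').1 = x := by rw [hbk']
    have hx2 : (C'.box k').2 = y := by rw [hbk']
    rcases eq_or_lt_of_le hxley with heq | hlt
    · have hzy : z = y := by omega
      rw [hdiff, hzy]
    · rcases hzend with hz | hz
      · exfalso
        have hdx : env C' k' \ env C' (k'-1) = {x} := by rw [hdiff, hz, hx1]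
        obtain ⟨x', hx'mem, hx'lt⟩ := larger_of_diff_left C' hk1' hk2' hbk' hlt hdx
        rw [hbox'] at hx'mem
        exact hC ⟨x', hx'mem, hx'lt⟩
      · have hzy : z = y := by omega
        rw [hdiff, hzy]
  constructor
  · constructor
    · intro hA
      have hdy := hA.2 lc C hlo hhi hbox k hk1 hk2 hbk
      rcases eq_or_lt_of_le hxley with heq | hlt
      · exact Or.inl heq
      · obtain ⟨y', hmem, hlt'⟩ := shorter_of_diff_right C hk1 hk2 hbk hlt hdy.symm
        rw [hbox] at hmem
        exact Or.inr ⟨y', hmem, hlt'⟩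
    · exact hBA
  · constructor
    · intro hA
      rintro ⟨x', hx'F, hxx'⟩
      have hdy := hA.2 lc C hlo hhi hbox k hk1 hk2 hbk
      have hmem : (x', y) ∈ boxesOf C := by rw [hbox]; exact hx'F
      have hdx := diff_left_of_larger C hk1 hk2 hbk hmem hxx'
      have hyx : y = x := by
        have h1 : y ∈ env C k \ env C (k-1) := by rw [← hdy]; rfl
        rw [hdx] at h1
        exact h1
      have hx'le : x' ≤ y := (hF.1.1 _ hx'F).1
      omega
    · exact hCA

end IBoxes
end
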